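/- arXiv:1904.02944 — 2 statements merged into one kernel-verified Lean document; each statement's English description precedes it below -/
import Mathlib

section
/- Let G be a graph and Z, V' ⊆ V(G) such that G[V'] is connected, and let U = N_G(V'). Let X and Y be two inclusion-minimal Z–U separators, both disjoint from V', such that Y dominates X. Let C_X and C_Y be the unique connected components containing V' in G − X and in G − Y, respectively, and set A_X = G − V(C_X), B_X = G[X ∪ V(C_X)], A_Y = G − V(C_Y), B_Y = G[Y ∪ V(C_Y)]. Then V(A_X) ⊊ V(A_Y) (and hence X ⊆ V(A_Y)). -/
open SimpleGraph

set_option autoImplicit false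

/-!  Common definitions: graphs, topological minors, rooted graphs, folios,
walls, flat walls, combinatorial maps (Euler genus), tree decompositions,
separators.  The computational model is abstracted: an "algorithm running
in time `T`" is modelled as a function together with a running-time bound. -/

/-- A witness that `H` is a topological minor of `G`: an injective map `emb` on
branch vertices together with internally vertex-disjoint paths realizing the
edges, such that no branch vertex is internal to any path. -/
structure TMWitness {α : Type*} {β : Type*} (H : SimpleGraph α) (G : SimpleGraph β) where
  emb : α → β
  inj : Function.Injective emb
  path : ∀ ⦃a b : α⦄, H.Adj a b → G.Walk (emb a) (emb b)
  isPath : ∀ ⦃a b : α⦄ (h : H.Adj a b), (path h).IsPath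
  rev : ∀ ⦃a b : α⦄ (h : H.Adj a b), path h.symm = (path h).reverse
  disj : ∀ ⦃a b c d : α⦄ (h₁ : H.Adj a b) (h₂ : H.Adj c d), s(a, b) ≠ s(c, d) →
    ∀ x : β, x ∈ (path h₁).support → x ∈ (path h₂).support →
      (x = emb a ∨ x = emb b) ∧ (x = emb c ∨ x = emb d)
  branch : ∀ ⦃a b : α⦄ (h : H.Adj a b), ∀ c : α, emb c ∈ (path h).support → c = a ∨ c = b

/-- `H` is a topological minor of `G`. -/
def IsTopMinor {α : Type*} {β : Type*} (H : SimpleGraph α) (G : SimpleGraph β) : Prop :=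
  Nonempty (TMWitness H G)

/-- `H` is a minor of `G` (branch sets model). -/
def IsMinor {α : Type*} {β : Type*} (H : SimpleGraph α) (G : SimpleGraph β) : Prop :=
  ∃ φ : α → Set β,
    (∀ a, (G.induce (φ a)).Connected) ∧
    (∀ ⦃a b : α⦄, a ≠ b → Disjoint (φ a) (φ b)) ∧
    (∀ ⦃a b : α⦄, H.Adj a b → ∃ u ∈ φ a, ∃ v ∈ φ b, G.Adj u v)

/-- A rooted graph: a graph with a set of roots injectively labelled by naturals. -/
structure RootedGraph (V : Type*) where
  graph : SimpleGraph V
  roots : Set V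
  label : V → ℕ
  inj : Set.InjOn label roots

/-- Deletion of a vertex set from a rooted graph. -/
def RootedGraph.delete {V : Type*} (G : RootedGraph V) (S : Set V) : RootedGraph ↥Sᶜ where
  graph := G.graph.induce Sᶜ
  roots := {x : ↥Sᶜ | (x : V) ∈ G.roots}
  label := fun x => G.label x
  inj := fun x hx y hy h => Subtype.ext (G.inj hx hy h)

/-- Topological minor of rooted graphs: roots are mapped to identically labelled roots. -/
def RootedTopMinor {α β : Type*} (H : RootedGraph α) (G : RootedGraph β) : Prop :=
  ∃ wt : TMWitness H.graph G.graph,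
    ∀ a ∈ H.roots, wt.emb a ∈ G.roots ∧ G.label (wt.emb a) = H.label a

noncomputable def edgeCount {α : Type*} (H : SimpleGraph α) : ℕ := H.edgeSet.ncard

/-- The number of isolated (degree-zero) vertices. -/
noncomputable def isolCount {α : Type*} (H : SimpleGraph α) : ℕ :=
  {v : α | ∀ w : α, ¬ H.Adj v w}.ncard

/-- `H` belongs to the `δ`-folio of the rooted graph `G`. -/
def InFolio {β : Type*} (δ : ℕ) {m : ℕ} (H : RootedGraph (Fin m)) (G : RootedGraph β) : Prop :=
  edgeCount H.graph + isolCount H.graph ≤ δ ∧ RootedTopMinor H G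

/-- `G ∪ X` where `X` is a graph on the root labels of `G`. -/
def RootedGraph.addX {β : Type*} (G : RootedGraph β) (X : SimpleGraph ℕ) : RootedGraph β where
  graph := G.graph ⊔ SimpleGraph.fromRel
    (fun a b => a ∈ G.roots ∧ b ∈ G.roots ∧ X.Adj (G.label a) (G.label b))
  roots := G.roots
  label := G.label
  inj := G.inj

/-- Two rooted graphs have the same extended `δ`-folio. -/
def SameExtFolio {β γ : Type*} (δ : ℕ) (G₁ : RootedGraph β) (G₂ : RootedGraph γ) : Prop :=
  ∀ (X : SimpleGraph ℕ) (m : ℕ) (H : RootedGraph (Fin m)),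
    InFolio δ H (G₁.addX X) ↔ InFolio δ H (G₂.addX X)

/-- `v` is irrelevant for the extended `δ`-folio of `G`. -/
def IrrelevantFor {β : Type*} (δ : ℕ) (G : RootedGraph β) (v : β) : Prop :=
  SameExtFolio δ G (G.delete {v})

/-- `v` is `(δ,k)`-irrelevant in `G`. -/
def DKIrrelevant {β : Type*} (δ k : ℕ) (G : RootedGraph β) (v : β) : Prop :=
  ∀ S : Set β, S.ncard ≤ k →
    SameExtFolio δ (G.delete S) ((G.delete S).delete {x : ↥Sᶜ | (x : β) = v})

/-- `α(δ) = 16 δ²`. -/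
def alphaF (δ : ℕ) : ℕ := 16 * δ ^ 2

/-- The `a × b` grid graph. -/
def gridGraph (a b : ℕ) : SimpleGraph (Fin a × Fin b) :=
  SimpleGraph.fromRel (fun p q =>
    (p.1 = q.1 ∧ (q.2 : ℕ) = (p.2 : ℕ) + 1) ∨ (p.2 = q.2 ∧ (q.1 : ℕ) = (p.1 : ℕ) + 1))

/-- The `h × (2r)` grid with alternate vertical edges removed (before deleting
degree-one vertices). -/
def preWall (h r : ℕ) : SimpleGraph (Fin h × Fin (2 * r)) :=
  SimpleGraph.fromRel (fun p q =>
    (p.1 = q.1 ∧ (q.2 : ℕ) = (p.2 : ℕ) + 1) ∨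
    (p.2 = q.2 ∧ (q.1 : ℕ) = (p.1 : ℕ) + 1 ∧ (p.1 : ℕ) % 2 = (p.2 : ℕ) % 2))

def elemWallVerts (h r : ℕ) : Set (Fin h × Fin (2 * r)) :=
  {v | 2 ≤ ((preWall h r).neighborSet v).ncard}

/-- The elementary wall of height `h` and width `r`. -/
def elemWall (h r : ℕ) : SimpleGraph ↥(elemWallVerts h r) :=
  (preWall h r).induce (elemWallVerts h r)

/-- The pegs of the elementary wall: its vertices of degree two. -/
def elemWallPegs (h r : ℕ) : Set ↥(elemWallVerts h r) :=
  {v | ((elemWall h r).neighborSet v).ncard = 2}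

/-- The witness `wit` exhibits `Wg` (with vertex set `U`) as a subdivision of the
`(w × w)`-elementary wall, i.e. a `(w × w)`-wall. -/
def WallCover {V : Type*} (w : ℕ) (Wg : SimpleGraph V) (U : Set V)
    (wit : TMWitness (elemWall w w) Wg) : Prop :=
  (∀ v ∈ U, (∃ a, wit.emb a = v) ∨
    ∃ a b, ∃ h : (elemWall w w).Adj a b, v ∈ (wit.path h).support) ∧
  (∀ a, wit.emb a ∈ U) ∧
  (∀ ⦃a b⦄ (h : (elemWall w w).Adj a b), ∀ v ∈ (wit.path h).support, v ∈ U) ∧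
  (∀ e ∈ Wg.edgeSet, ∃ a b, ∃ h : (elemWall w w).Adj a b, e ∈ (wit.path h).edges)

/-- `Wg` with vertex set `U` is a `(w × w)`-wall. -/
def IsWallOn {V : Type*} (w : ℕ) (Wg : SimpleGraph V) (U : Set V) : Prop :=
  ∃ wit : TMWitness (elemWall w w) Wg, WallCover w Wg U wit

/-- `(A,B)` (with vertex parts `Av`, `Bv`) is a separation of `G`, whose vertex
set is `U`. -/
def IsSeparationOn {V : Type*} (U : Set V) (G A B : SimpleGraph V) (Av Bv : Set V) : Prop :=
  A ⊔ B = G ∧ Disjoint A.edgeSet B.edgeSet ∧ Av ∪ Bv = U ∧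
  (∀ ⦃a b : V⦄, A.Adj a b → a ∈ Av ∧ b ∈ Av) ∧
  (∀ ⦃a b : V⦄, B.Adj a b → a ∈ Bv ∧ b ∈ Bv)

def IsSeparation {V : Type*} (G A B : SimpleGraph V) (Av Bv : Set V) : Prop :=
  IsSeparationOn Set.univ G A B Av Bv

/-- The graph `G - A` (vertex deletion, realised by removing incident edges). -/
def delA {V : Type*} (G : SimpleGraph V) (A : Set V) : SimpleGraph V :=
  SimpleGraph.fromRel (fun a b => G.Adj a b ∧ a ∉ A ∧ b ∉ A)

/-- `C` is a cycle with vertex set `S`. -/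
def IsCycleGraphOn {V : Type*} (C : SimpleGraph V) (S : Set V) : Prop :=
  (∀ ⦃a b : V⦄, C.Adj a b → a ∈ S ∧ b ∈ S) ∧
  (∀ a ∈ S, (C.neighborSet a).ncard = 2) ∧
  (C.induce S).Connected

/-- A combinatorial map (flag system) on a set of flags `F`: three fixed-point-free
involutions with `s0 s2 = s2 s0` fixed-point-free.  Such flag systems encode the
2-cell embeddings of graphs into closed surfaces (orientable or not). -/
structure CombMap (F : Type) where
  s0 : Equiv.Perm F
  s1 : Equiv.Perm F
  s2 : Equiv.Perm F
  invol0 : ∀ f, s0 (s0 f) = f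
  invol1 : ∀ f, s1 (s1 f) = f
  invol2 : ∀ f, s2 (s2 f) = f
  nfix0 : ∀ f, s0 f ≠ f
  nfix1 : ∀ f, s1 f ≠ f
  nfix2 : ∀ f, s2 f ≠ f
  comm02 : ∀ f, s0 (s2 f) = s2 (s0 f)
  nfix02 : ∀ f, s0 (s2 f) ≠ f

/-- Two flags lie in the same orbit of the group generated by `S`. -/
def sameOrbit {F : Type} (S : Set (Equiv.Perm F)) (x y : F) : Prop :=
  Quot.mk (fun a b : F => ∃ σ ∈ S, σ a = b) x = Quot.mk (fun a b : F => ∃ σ ∈ S, σ a = b) y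

/-- Number of orbits on flags of the group generated by `S`. -/
noncomputable def orbCount {F : Type} (S : Set (Equiv.Perm F)) : ℕ :=
  Nat.card (Quot (fun a b : F => ∃ σ ∈ S, σ a = b))

noncomputable def CombMap.nV {F : Type} (M : CombMap F) : ℕ := orbCount {M.s1, M.s2}
noncomputable def CombMap.nE {F : Type} (M : CombMap F) : ℕ := orbCount {M.s0, M.s2}
noncomputable def CombMap.nF {F : Type} (M : CombMap F) : ℕ := orbCount {M.s0, M.s1}
noncomputable def CombMap.nC {F : Type} (M : CombMap F) : ℕ := orbCount {M.s0, M.s1, M.s2}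

/-- The combinatorial map `M` is (an embedding of) the simple graph `G`:
vertices of the map are the `⟨s1,s2⟩`-orbits, edges are the `⟨s0,s2⟩`-orbits,
and they correspond bijectively to the non-isolated vertices and the edges of `G`. -/
structure MapOf {V : Type*} (G : SimpleGraph V) {F : Type} (M : CombMap F) where
  vm : F → V
  inv1 : ∀ f, vm (M.s1 f) = vm f
  inv2 : ∀ f, vm (M.s2 f) = vm f
  adj : ∀ f, G.Adj (vm f) (vm (M.s0 f))
  surj : ∀ ⦃a b : V⦄, G.Adj a b → ∃ f, vm f = a ∧ vm (M.s0 f) = b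
  edgeInj : ∀ f g, vm f = vm g → vm (M.s0 f) = vm (M.s0 g) → g = f ∨ g = M.s2 f
  vertInj : ∀ f g, vm f = vm g → sameOrbit {M.s1, M.s2} f g

/-- `G` has Euler genus at most `g`: it admits an embedding into a closed surface
of Euler genus at most `g`, i.e. a combinatorial map with
`2·c - (V - E + F) ≤ g`. -/
def EulerGenusLE {V : Type*} (G : SimpleGraph V) (g : ℕ) : Prop :=
  ∃ (F : Type) (_ : Fintype F) (M : CombMap F) (_ : MapOf G M),
    2 * M.nC + M.nE ≤ g + M.nV + M.nF

/-- `H` is a plane graph one of whose faces (the outer face) is bounded by the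
cycle `C`. -/
def PlanarWithFace {V : Type*} (H C : SimpleGraph V) : Prop :=
  ∃ (F : Type) (_ : Fintype F) (M : CombMap F) (mo : MapOf H M),
    2 * M.nC + M.nE ≤ M.nV + M.nF ∧
    ∃ f₀ : F, ∀ a b : V, C.Adj a b ↔
      ∃ f : F, sameOrbit {M.s0, M.s1} f₀ f ∧ mo.vm f = a ∧ mo.vm (M.s0 f) = b

/-- A tree decomposition of `G`. -/
structure TreeDecomp {V : Type*} (G : SimpleGraph V) where
  ι : Type
  T : SimpleGraph ι
  tree : T.IsTree
  bag : ι → Set V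
  covV : ∀ v, ∃ i, v ∈ bag i
  covE : ∀ ⦃u v : V⦄, G.Adj u v → ∃ i, u ∈ bag i ∧ v ∈ bag i
  conn : ∀ v : V, (T.induce {i | v ∈ bag i}).Connected

/-- The treewidth of `G` is at most `t`. -/
def TreewidthLE {V : Type*} (G : SimpleGraph V) (t : ℕ) : Prop :=
  ∃ D : TreeDecomp G, ∀ i, (D.bag i).encard ≤ (t : ℕ∞) + 1

/-- A nice tree decomposition of `G`: a rooted tree decomposition (given by a
parent function) with empty root bag where every node is a leaf, forget,
introduce or join node. -/
structure NiceTreeDecomp {V : Type*} (G : SimpleGraph V) where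
  ι : Type
  root : ι
  par : ι → ι
  parRoot : par root = root
  reach : ∀ i, ∃ n : ℕ, par^[n] i = root
  bag : ι → Set V
  bagRoot : bag root = ∅
  covV : ∀ v, ∃ i, v ∈ bag i
  covE : ∀ ⦃u v : V⦄, G.Adj u v → ∃ i, u ∈ bag i ∧ v ∈ bag i
  conn : ∀ v : V, ∃ top : ι, v ∈ bag top ∧ ∀ i, v ∈ bag i →
    ∃ n : ℕ, par^[n] i = top ∧ ∀ m ≤ n, v ∈ bag (par^[m] i)
  nice : ∀ i : ι,
    ({j : ι | par j = i ∧ j ≠ i} = ∅ ∧ bag i = ∅) ∨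
    (∃ j, {j' : ι | par j' = i ∧ j' ≠ i} = {j} ∧ ∃ x ∈ bag j, bag i = bag j \ {x}) ∨
    (∃ j, {j' : ι | par j' = i ∧ j' ≠ i} = {j} ∧ ∃ x ∈ bag i, bag i \ {x} = bag j) ∨
    (∃ j k, j ≠ k ∧ {j' : ι | par j' = i ∧ j' ≠ i} = {j, k} ∧
      bag j = bag i ∧ bag k = bag i)

/-- An instance of FlatWall-FindFolio: a set `A` of at most `t` apices and a
`(w × w)`-wall in `G - A` which is flat, witnessed by a flatness tuple
`(A', B', C, G̃, G₀, …, G_k)` in which each `G_i` (`i ≥ 1`) has treewidth at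
most `s`. -/
structure FlatWallInstance {V : Type*} (G : SimpleGraph V) (w s t : ℕ) where
  A : Set V
  hA : A.encard ≤ (t : ℕ∞)
  Ag : SimpleGraph V
  Bg : SimpleGraph V
  Av : Set V
  Bv : Set V
  sep : IsSeparationOn Aᶜ (delA G A) Ag Bg Av Bv
  wallG : SimpleGraph V
  wallV : Set V
  wall_le : wallG ≤ Bg
  wit : TMWitness (elemWall w w) wallG
  cover : WallCover w wallG wallV wit
  wallV_sub : wallV ⊆ Bv
  Cg : SimpleGraph V
  C_cycle : IsCycleGraphOn Cg (Av ∩ Bv)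
  C_sub_wall : Av ∩ Bv ⊆ wallV
  pegs : ∀ p ∈ elemWallPegs w w, wit.emb p ∈ Av ∩ Bv
  k : ℕ
  Gs : Fin (k + 1) → SimpleGraph V
  Gv : Fin (k + 1) → Set V
  GsSupp : ∀ i, ∀ ⦃a b : V⦄, (Gs i).Adj a b → a ∈ Gv i ∧ b ∈ Gv i
  decompE : Bg ⊔ Cg = ⨆ i, Gs i
  decompV : (⋃ i, Gv i) = Bv
  edisj : ∀ i j, i ≠ j → Disjoint (Gs i).edgeSet (Gs j).edgeSet
  C_le_G0 : Cg ≤ Gs 0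
  Gt : SimpleGraph V
  G0_le : Gs 0 ≤ Gt
  GtSupp : ∀ ⦃a b : V⦄, Gt.Adj a b → a ∈ Gv 0 ∧ b ∈ Gv 0
  planar : PlanarWithFace Gt Cg
  smallInt : ∀ i, i ≠ 0 → (Gv i ∩ Gv 0).encard ≤ 3
  cliqInt : ∀ i, i ≠ 0 → ∀ a ∈ Gv i ∩ Gv 0, ∀ b ∈ Gv i ∩ Gv 0, a ≠ b → Gt.Adj a b
  pairInt : ∀ i j, i ≠ j → Gv i ∩ Gv j ⊆ Gv 0
  twBound : ∀ i, i ≠ 0 → TreewidthLE ((Gs i).induce (Gv i)) s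

/-- `B` is a minor model of the complete graph `K_t` in `G`. -/
def CliqueMinorModel {V : Type*} (G : SimpleGraph V) (t : ℕ) (B : Fin t → Set V) : Prop :=
  (∀ i, (G.induce (B i)).Connected) ∧
  (∀ ⦃i j : Fin t⦄, i ≠ j → Disjoint (B i) (B j)) ∧
  (∀ ⦃i j : Fin t⦄, i ≠ j → ∃ a ∈ B i, ∃ b ∈ B j, G.Adj a b)

/-- `R_G(X, S)`: the set of vertices reachable from `X ∖ S` in `G - S`. -/
def Reach {V : Type*} (G : SimpleGraph V) (X S : Set V) : Set V :=
  {v | ∃ hv : v ∉ S, ∃ x, ∃ hx : x ∉ S, x ∈ X ∧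
    (G.induce Sᶜ).Reachable ⟨x, hx⟩ ⟨v, hv⟩}

/-- `S` is an `X`–`Y` separator in `G`. -/
def IsSep {V : Type*} (G : SimpleGraph V) (X Y S : Set V) : Prop :=
  ∀ y ∈ Y, y ∉ Reach G X S

/-- The neighbourhood of a vertex set. -/
def setNbhd {V : Type*} (G : SimpleGraph V) (S : Set V) : Set V :=
  {v | v ∉ S ∧ ∃ u ∈ S, G.Adj u v}

/-- Rooted minor: roots of `H` are represented by branch sets containing the
identically labelled root of `G`. -/
def RootedMinor {α β : Type*} (H : RootedGraph α) (G : RootedGraph β) : Prop :=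
  ∃ φ : α → Set β,
    (∀ a, (G.graph.induce (φ a)).Connected) ∧
    (∀ ⦃a b : α⦄, a ≠ b → Disjoint (φ a) (φ b)) ∧
    (∀ ⦃a b : α⦄, H.graph.Adj a b → ∃ u ∈ φ a, ∃ v ∈ φ b, G.graph.Adj u v) ∧
    (∀ a ∈ H.roots, ∃ b ∈ G.roots, b ∈ φ a ∧ G.label b = H.label a)

/-- The `δ`-minor folio of `G` relative to its roots is generic: every rooted
graph with the same root labels and detail at most `δ` is a rooted minor of `G`. -/
def GenericFolio {β : Type*} (δ : ℕ) (G : RootedGraph β) : Prop :=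
  ∀ (m : ℕ) (H : RootedGraph (Fin m)),
    edgeCount H.graph ≤ δ → ((Set.univ : Set (Fin m)) \ H.roots).ncard ≤ δ →
    H.label '' H.roots = G.label '' G.roots →
    RootedMinor H G

/-- The closed neighbourhood, inside the realization prescribed by the witness
`wt`, of the set of branch vertices. -/
def realClosedNbhd {α β : Type*} {H : SimpleGraph α} {G : SimpleGraph β}
    (wt : TMWitness H G) : Set β :=
  Set.range wt.emb ∪
    {v | ∃ a b, ∃ h : H.Adj a b, ∃ c : α, s(wt.emb c, v) ∈ (wt.path h).edges}

section helpers
variable {V : Type*} (G : SimpleGraph V)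

lemma mem_reach_self {A S : Set V} {x : V}
    (hx : x ∈ A) (hxS : x ∉ S) : x ∈ Reach G A S :=
  ⟨hxS, x, hxS, hx, Reachable.refl _⟩

lemma reach_not_mem {A S : Set V} {v : V} (hv : v ∈ Reach G A S) : v ∉ S := by
  obtain ⟨h, -⟩ := hv; exact h

lemma reach_adj {A S : Set V} {v w : V}
    (hv : v ∈ Reach G A S) (h : G.Adj v w) (hw : w ∉ S) : w ∈ Reach G A S := by
  obtain ⟨hvS, x, hxS, hxA, hr⟩ := hv
  exact ⟨hw, x, hxS, hxA, hr.trans (Adj.reachable (by exact h : (G.induce Sᶜ).Adj ⟨v, hvS⟩ ⟨w, hw⟩))⟩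

lemma reach_reachable {A S : Set V} {v w : V}
    (hv : v ∈ Reach G A S) (hvS : v ∉ S) (hw : w ∉ S)
    (hr : (G.induce Sᶜ).Reachable ⟨v, hvS⟩ ⟨w, hw⟩) : w ∈ Reach G A S := by
  obtain ⟨hvS', x, hxS, hxA, hr'⟩ := hv
  exact ⟨hw, x, hxS, hxA, hr'.trans (by convert hr)⟩

lemma walk_prop (S : Set V) (P : V → Prop)
    (step : ∀ ⦃v w : V⦄, P v → G.Adj v w → w ∉ S → P w) :
    ∀ {a b : ↥Sᶜ} (w : (G.induce Sᶜ).Walk a b), P a.1 → P b.1 := by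
  intro a b w
  induction w with
  | nil => exact id
  | @cons a c b h p ih => exact fun ha => ih (step ha h c.2)

lemma reach_elim {A S : Set V} {v : V} (hv : v ∈ Reach G A S)
    (P : V → Prop) (hA : ∀ a ∈ A, a ∉ S → P a)
    (step : ∀ ⦃v w : V⦄, P v → G.Adj v w → w ∉ S → P w) : P v := by
  obtain ⟨hvS, x, hxS, hxA, hr⟩ := hv
  exact hr.elim fun p => walk_prop G S P step p (hA x hxA hxS)

end helpers

/-- Lemma 4.7: let `Z, V' ⊆ V(G)` with `G[V']` connected and
`U = N_G(V')`.  Let `X` and `Y` be inclusion-minimal `Z`–`U` separators, both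
disjoint from `V'`, such that `Y` dominates `X` (i.e. `|Y| ≤ |X|` and
`R_G(Z, X) ⊊ R_G(Z, Y)`).  With `C_X` (resp. `C_Y`) the component of `V'` in
`G - X` (resp. `G - Y`), `A_X = G - V(C_X)` and `A_Y = G - V(C_Y)`, we get
`V(A_X) ⊊ V(A_Y)`, and hence `X ⊆ V(A_Y)`. -/
theorem separator_domination_push {V : Type} [Fintype V] (G : SimpleGraph V)
    (Z V' : Set V) (hconn : (G.induce V').Connected)
    (X Y : Set V)
    (hXV' : Disjoint X V') (hYV' : Disjoint Y V')
    (hXsep : IsSep G Z (setNbhd G V') X)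
    (hXmin : ∀ X' ⊂ X, ¬ IsSep G Z (setNbhd G V') X')
    (hYsep : IsSep G Z (setNbhd G V') Y)
    (hYmin : ∀ Y' ⊂ Y, ¬ IsSep G Z (setNbhd G V') Y')
    (hdom : Y.ncard ≤ X.ncard ∧ Reach G Z X ⊂ Reach G Z Y) :
    (Set.univ \ Reach G V' X) ⊂ (Set.univ \ Reach G V' Y) ∧
      X ⊆ Set.univ \ Reach G V' Y := by
  set U := setNbhd G V' with hU
  -- connectivity transfer: any two vertices of V' are reachable in G - S for S disjoint from V'
  have key_conn : ∀ (S : Set V), Disjoint S V' → ∀ {v₁ v₂ : V}, v₁ ∈ V' → v₂ ∈ V' →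
      ∀ (h1 : v₁ ∉ S) (h2 : v₂ ∉ S), (G.induce Sᶜ).Reachable ⟨v₁, h1⟩ ⟨v₂, h2⟩ := by
    intro S hS v₁ v₂ h1 h2 hn1 hn2
    let f : G.induce V' →g G.induce Sᶜ :=
      ⟨fun v => ⟨v.1, Set.disjoint_right.mp hS v.2⟩, fun {a b} h => h⟩
    exact (hconn.preconnected ⟨v₁, h1⟩ ⟨v₂, h2⟩).map f
  have hUsep : IsSep G Z U U := by
    intro u hu hmem
    exact (reach_not_mem G hmem) hu
  -- V' is in Reach G V' S whenever S is disjoint from V'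
  have hVX : ∀ v ∈ V', v ∈ Reach G V' X :=
    fun v hv => mem_reach_self G hv (Set.disjoint_right.mp hXV' hv)
  have hVY : ∀ v ∈ V', v ∈ Reach G V' Y :=
    fun v hv => mem_reach_self G hv (Set.disjoint_right.mp hYV' hv)
  -- if some vertex of V' is Z-reachable avoiding S (minimal sep), then S = U
  have force : ∀ (S : Set V), Disjoint S V' → IsSep G Z U S →
      (∀ S' ⊂ S, ¬ IsSep G Z U S') → ∀ v ∈ V', v ∈ Reach G Z S → S = U := by
    intro S hSV' hSsep hSmin v hvV' hvR
    -- all of V' is reachable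
    have hall : ∀ w ∈ V', w ∈ Reach G Z S := by
      intro w hw
      exact reach_reachable G hvR (Set.disjoint_right.mp hSV' hvV')
        (Set.disjoint_right.mp hSV' hw)
        (key_conn S hSV' hvV' hw _ _)
    -- then U ⊆ S
    have hUS : U ⊆ S := by
      intro u hu
      by_contra huS
      obtain ⟨huV', v', hv'V', hadj⟩ := id hu
      exact hSsep u hu (reach_adj G (hall v' hv'V') hadj huS)
    rcases eq_or_ne S U with h | h
    · exact h
    · exact absurd hUsep (hSmin U (hUS.ssubset_of_ne (Ne.symm h)))
  -- Fact A : no vertex of V' is Z-reachable avoiding Y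
  have factA : ∀ v ∈ V', v ∉ Reach G Z Y := by
    intro v hvV' hvR
    have hYU : Y = U := force Y hYV' hYsep hYmin v hvV' hvR
    -- the walk from Z to v in G - U stays in V', so Z meets V'
    have hzV' : ∃ z ∈ Z, z ∈ V' := by
      rw [hYU] at hvR
      obtain ⟨hvS, z, hzS, hzZ, hr⟩ := hvR
      refine ⟨z, hzZ, ?_⟩
      refine hr.symm.elim fun p => walk_prop G U (· ∈ V') ?_ p hvV'
      intro a b ha hadj hbU
      by_contra hbV'
      exact hbU ⟨hbV', a, ha, hadj⟩
    obtain ⟨z, hzZ, hzV'⟩ := hzV'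
    have hzX : z ∉ X := Set.disjoint_right.mp hXV' hzV'
    have hXU : X = U := force X hXV' hXsep hXmin z hzV' (mem_reach_self G hzZ hzX)
    exact hdom.2.ne (by rw [hXU, hYU])
  -- Fact D : Reach G V' Y is disjoint from Reach G Z Y
  have factD : ∀ v, v ∈ Reach G V' Y → v ∉ Reach G Z Y := by
    intro v hvC hvR
    obtain ⟨hvY, v', hv'Y, hv'V', hr⟩ := hvC
    exact factA v' hv'V' (reach_reachable G hvR hvY hv'Y hr.symm)
  -- X ⊆ Reach G Z Y ∪ Y
  have hXsub : ∀ x ∈ X, x ∈ Reach G Z Y ∨ x ∈ Y := by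
    intro x hx
    have hnsep : ¬ IsSep G Z U (X \ {x}) := hXmin _ (Set.sdiff_singleton_ssubset.mpr hx)
    rw [IsSep] at hnsep
    push_neg at hnsep
    obtain ⟨u, hu, huR⟩ := hnsep
    have key : x ∈ Z ∨ ∃ w ∈ Reach G Z X, G.Adj w x := by
      have := reach_elim G huR
        (fun v => v ∈ Reach G Z X ∨ x ∈ Z ∨ ∃ w ∈ Reach G Z X, G.Adj w x)
        (fun a haZ haS => by
          by_cases haX : a ∈ X
          · right; left
            have : a = x := by
              by_contra hne
              exact haS ⟨haX, hne⟩
            rwa [this] at haZ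
          · exact Or.inl (mem_reach_self G haZ haX))
        (fun v w hPv hadj hwS => by
          rcases hPv with hvR | hP
          · by_cases hwX : w ∈ X
            · have : w = x := by
                by_contra hne
                exact hwS ⟨hwX, hne⟩
              exact Or.inr (Or.inr ⟨v, hvR, this ▸ hadj⟩)
            · exact Or.inl (reach_adj G hvR hadj hwX)
          · exact Or.inr hP)
      rcases this with huRX | hP
      · exact absurd huRX (hXsep u hu)
      · exact hP
    by_cases hxY : x ∈ Y
    · exact Or.inr hxY
    · left
      rcases key with hxZ | ⟨w, hwR, hadj⟩
      · exact mem_reach_self G hxZ hxY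
      · exact reach_adj G (hdom.2.subset hwR) hadj hxY
  -- C_Y ⊆ C_X
  have hCC : Reach G V' Y ⊆ Reach G V' X := by
    intro v hv
    have := reach_elim G hv (fun v => v ∈ Reach G V' X ∧ v ∈ Reach G V' Y)
      (fun a haV' haY => ⟨hVX a haV', mem_reach_self G haV' haY⟩)
      (fun v w hP hadj hwY => by
        have hwCY : w ∈ Reach G V' Y := reach_adj G hP.2 hadj hwY
        have hwX : w ∉ X := by
          intro hwX
          rcases hXsub w hwX with hwR | hwY'
          · exact factD w hwCY hwR
          · exact hwY hwY'
        exact ⟨reach_adj G hP.1 hadj hwX, hwCY⟩)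
    exact this.1
  -- a vertex of Y not in X
  have hYX : ∃ y, y ∈ Y ∧ y ∉ X := by
    by_contra h
    push_neg at h
    rcases eq_or_ne Y X with hYeq | hne
    · exact hdom.2.ne (by rw [hYeq])
    · exact hXmin Y (HasSubset.Subset.ssubset_of_ne h hne) hYsep
  obtain ⟨y, hyY, hyX⟩ := hYX
  -- y ∈ Reach G V' X
  have hyCX : y ∈ Reach G V' X := by
    have hnsep : ¬ IsSep G Z U (Y \ {y}) := hYmin _ (Set.sdiff_singleton_ssubset.mpr hyY)
    rw [IsSep] at hnsep
    push_neg at hnsep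
    obtain ⟨u, hu, huR⟩ := hnsep
    by_cases huy : u = y
    · -- y ∈ U, adjacent to V'
      obtain ⟨huV', v', hv'V', hadj⟩ := hu
      exact reach_adj G (hVX v' hv'V') (huy ▸ hadj) hyX
    · have huY : u ∉ Y := by
        intro h
        exact (reach_not_mem G huR) ⟨h, huy⟩
      obtain ⟨huV', v', hv'V', hadj⟩ := hu
      have huCY : u ∈ Reach G V' Y := reach_adj G (hVY v' hv'V') hadj huY
      -- walk from u back to Z in G - (Y \ {y})
      obtain ⟨huS, z, hzS, hzZ, hr⟩ := huR
      have : z ∈ Reach G V' Y ∨ y ∈ Reach G V' X := hr.symm.elim fun p => walk_prop G (Y \ {y}) (fun v => v ∈ Reach G V' Y ∨ y ∈ Reach G V' X)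
        (fun v w hP hadj hwS => by
          rcases hP with hvC | hyC
          · by_cases hwY : w ∈ Y
            · have hwy : w = y := by
                by_contra hne
                exact hwS ⟨hwY, hne⟩
              exact Or.inr (reach_adj G (hCC hvC) (hwy ▸ hadj) hyX)
            · exact Or.inl (reach_adj G hvC hadj hwY)
          · exact Or.inr hyC) p (Or.inl huCY)
      rcases this with hzC | hyC
      · exact absurd (mem_reach_self G hzZ (reach_not_mem G hzC)) (factD z hzC)
      · exact hyC
  have hyCY : y ∉ Reach G V' Y := fun h => (reach_not_mem G h) hyY
  constructor
  · refine ⟨fun v hv => ⟨trivial, fun h => hv.2 (hCC h)⟩, fun hsub => ?_⟩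
    exact (hsub ⟨trivial, hyCY⟩).2 hyCX
  · intro x hx
    refine ⟨trivial, fun hxC => ?_⟩
    rcases hXsub x hx with hxR | hxY
    · exact factD x hxC hxR
    · exact (reach_not_mem G hxC) hxY
end

section
/- Let G be a graph, W a (w×w)-wall in G, and C a cycle in G such that there is a choice of pegs of W with every peg belonging to V(C). Let G₀, G₁, …, G_k be subgraphs of G and G̃ a plane graph witnessing that G is C-flat. Then G̃ contains the (w−2)×(w−2) grid as a minor. -/
open SimpleGraph

set_option autoImplicit false

namespace CFA
variable {w : ℕ}

lemma preWall_adj_iff {p q : Fin w × Fin (2*w)} :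
    (preWall w w).Adj p q ↔ ¬(p.1.val = q.1.val ∧ p.2.val = q.2.val) ∧
    ((p.1.val = q.1.val ∧ q.2.val = p.2.val + 1) ∨
     (p.2.val = q.2.val ∧ q.1.val = p.1.val + 1 ∧ p.1.val % 2 = p.2.val % 2) ∨
     (q.1.val = p.1.val ∧ p.2.val = q.2.val + 1) ∨
     (q.2.val = p.2.val ∧ p.1.val = q.1.val + 1 ∧ q.1.val % 2 = q.2.val % 2)) := by
  simp only [preWall, SimpleGraph.fromRel_adj, Prod.ext_iff, Fin.ext_iff, ne_eq, not_and]
  tauto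

lemma gridGraph_adj_iff {n : ℕ} {p q : Fin n × Fin n} :
    (gridGraph n n).Adj p q ↔ ¬(p.1.val = q.1.val ∧ p.2.val = q.2.val) ∧
    ((p.1.val = q.1.val ∧ q.2.val = p.2.val + 1) ∨
     (p.2.val = q.2.val ∧ q.1.val = p.1.val + 1) ∨
     (q.1.val = p.1.val ∧ p.2.val = q.2.val + 1) ∨
     (q.2.val = p.2.val ∧ p.1.val = q.1.val + 1)) := by
  simp only [gridGraph, SimpleGraph.fromRel_adj, Prod.ext_iff, Fin.ext_iff, ne_eq, not_and]
  tauto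

end CFA

namespace CFA
open SimpleGraph
variable {V : Type*}

lemma two_le_ncard {α : Type*} [Finite α] {s : Set α} {a b : α}
    (ha : a ∈ s) (hb : b ∈ s) (h : a ≠ b) : 2 ≤ s.ncard :=
  (Set.one_lt_ncard (Set.toFinite s)).2 ⟨a, ha, b, hb, h⟩

lemma induce_adj' {G : SimpleGraph V} {S : Set V} {u v : V} (hu : u ∈ S) (hv : v ∈ S)
    (h : G.Adj u v) : (G.induce S).Adj ⟨u, hu⟩ ⟨v, hv⟩ := by
  simpa using h

lemma reach_induce_of_adj {G : SimpleGraph V} {S : Set V} {u v : V}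
    (hu : u ∈ S) (hv : v ∈ S) (h : G.Adj u v) :
    (G.induce S).Reachable ⟨u, hu⟩ ⟨v, hv⟩ :=
  (induce_adj' hu hv h).reachable

lemma reach_induce_of_walk {G G' : SimpleGraph V} (hle : G' ≤ G) {S : Set V} :
    ∀ {u v : V} (p : G'.Walk u v), (∀ x ∈ p.support, x ∈ S) →
    ∀ (hu : u ∈ S) (hv : v ∈ S), (G.induce S).Reachable ⟨u, hu⟩ ⟨v, hv⟩ := by
  intro u v p
  induction p with
  | nil => intro _ hu hv; rfl
  | @cons a b c h q ih =>
    intro hp hu hv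
    have hb : b ∈ S := hp b (by simp)
    exact (reach_induce_of_adj hu hb (hle h)).trans
      (ih (fun x hx => hp x (by simp [hx])) hb hv)

lemma exists_walk_of_induce {G : SimpleGraph V} {S : Set V} {u v : ↥S}
    (p : (G.induce S).Walk u v) : ∃ q : G.Walk u.1 v.1, ∀ x ∈ q.support, x ∈ S := by
  induction p with
  | @nil a => exact ⟨.nil, by rintro x hx; simp at hx; subst hx; exact a.2⟩
  | @cons a b c h q ih =>
    obtain ⟨q', hq'⟩ := ih
    refine ⟨.cons (by simpa using h) q', ?_⟩
    intro x hx
    rw [SimpleGraph.Walk.support_cons] at hx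
    rcases List.mem_cons.1 hx with rfl | h2
    · exact a.2
    · exact hq' x h2

lemma induce_connected_of_reach {G : SimpleGraph V} {S : Set V} {a : V} (ha : a ∈ S)
    (h : ∀ x (hx : x ∈ S), (G.induce S).Reachable ⟨x, hx⟩ ⟨a, ha⟩) :
    (G.induce S).Connected := by
  rw [SimpleGraph.connected_iff]
  refine ⟨fun x y => ?_, ⟨⟨a, ha⟩⟩⟩
  have hx := h x.1 x.2
  have hy := h y.1 y.2
  exact (by simpa using hx.trans hy.symm : (G.induce S).Reachable x y)

lemma isPath_loop_nil {G : SimpleGraph V} {u : V} (p : G.Walk u u) (hp : p.IsPath) :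
    p = .nil := by
  cases p with
  | nil => rfl
  | cons h q =>
    rw [SimpleGraph.Walk.cons_isPath_iff] at hp
    exact absurd (SimpleGraph.Walk.end_mem_support q) hp.2

lemma reach_prefix {G Gw : SimpleGraph V} (hle : Gw ≤ G) {S : Set V} :
    ∀ {x y : V} (p : Gw.Walk x y), p.IsPath → ∀ (hx : x ∈ S),
      (∀ z ∈ p.support, z ≠ y → z ∈ S) →
      ∀ (v : V), v ∈ p.support → ∀ (hv : v ∈ S), v ≠ y →
      (G.induce S).Reachable ⟨x, hx⟩ ⟨v, hv⟩ := by
  intro x y p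
  induction p with
  | nil =>
    intro _ hx _ v hvmem hv hvy
    simp only [SimpleGraph.Walk.support_nil, List.mem_singleton] at hvmem
    exact absurd hvmem hvy
  | @cons a b c h q ih =>
    intro hp hx hS v hvmem hv hvy
    by_cases hva : v = a
    · subst hva; rfl
    · have hvq : v ∈ q.support := by
        rw [SimpleGraph.Walk.support_cons] at hvmem
        rcases List.mem_cons.1 hvmem with rfl | h2
        · exact absurd rfl hva
        · exact h2
      by_cases hbc : b = c
      · subst hbc
        have := isPath_loop_nil q (hp.of_cons)
        subst this
        simp only [SimpleGraph.Walk.support_nil, List.mem_singleton] at hvq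
        exact absurd hvq hvy
      · have hb : b ∈ S := hS b (by simp) hbc
        exact (reach_induce_of_adj hx hb (hle h)).trans
          (ih hp.of_cons hb (fun z hz hzy => hS z (by simp [hz]) hzy) v hvq hv hvy)

end CFA

namespace CFA
open SimpleGraph
variable {w : ℕ}

def wv (w r c : ℕ) (hr : r < w) (hc : c < 2*w) : Fin w × Fin (2*w) := (⟨r, hr⟩, ⟨c, hc⟩)

lemma preWall_adj_mk {r c r' c' : ℕ} (hr : r < w) (hc : c < 2*w) (hr' : r' < w) (hc' : c' < 2*w)
    (h : (r = r' ∧ (c' = c+1 ∨ c = c'+1)) ∨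
      (c = c' ∧ ((r' = r+1 ∧ r % 2 = c % 2) ∨ (r = r'+1 ∧ r' % 2 = c % 2)))) :
    (preWall w w).Adj (wv w r c hr hc) (wv w r' c' hr' hc') := by
  rw [preWall_adj_iff]
  simp only [wv]
  omega

lemma mem_verts_of_pair {v q1 q2 : Fin w × Fin (2*w)}
    (h1 : (preWall w w).Adj v q1) (h2 : (preWall w w).Adj v q2) (h : q1 ≠ q2) :
    v ∈ elemWallVerts w w :=
  two_le_ncard (by exact h1) (by exact h2) h

lemma wv_ne {r c r' c' : ℕ} {hr hc hr' hc'} (h : ¬(r = r' ∧ c = c')) :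
    wv w r c hr hc ≠ wv w r' c' hr' hc' := by
  simp only [wv, ne_eq, Prod.ext_iff, Fin.ext_iff]
  omega

/-- interior-column vertices are wall vertices -/
lemma mem_mid (hw : 3 ≤ w) {r c : ℕ} (hr : r < w) (hc1 : 1 ≤ c) (hc2 : c ≤ 2*w-2) :
    wv w r c hr (by omega) ∈ elemWallVerts w w := by
  refine mem_verts_of_pair
    (q1 := wv w r (c-1) hr (by omega)) (q2 := wv w r (c+1) hr (by omega))
    (preWall_adj_mk _ _ _ _ (by omega)) (preWall_adj_mk _ _ _ _ (by omega)) (wv_ne (by omega))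

lemma mem_col0 (hw : 3 ≤ w) {r : ℕ} (h1 : 1 ≤ r) (h2 : r ≤ w-2) :
    wv w r 0 (by omega) (by omega) ∈ elemWallVerts w w := by
  rcases Nat.even_or_odd r with he | ho
  · have h2' : r % 2 = 0 := Nat.even_iff.1 he
    exact mem_verts_of_pair
      (q1 := wv w r 1 (by omega) (by omega)) (q2 := wv w (r+1) 0 (by omega) (by omega))
      (preWall_adj_mk _ _ _ _ (by omega)) (preWall_adj_mk _ _ _ _ (by omega)) (wv_ne (by omega))
  · have h2' : r % 2 = 1 := Nat.odd_iff.1 ho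
    exact mem_verts_of_pair
      (q1 := wv w r 1 (by omega) (by omega)) (q2 := wv w (r-1) 0 (by omega) (by omega))
      (preWall_adj_mk _ _ _ _ (by omega)) (preWall_adj_mk _ _ _ _ (by omega)) (wv_ne (by omega))

lemma mem_colLast (hw : 3 ≤ w) {r : ℕ} (h1 : 1 ≤ r) (h2 : r ≤ w-2) :
    wv w r (2*w-1) (by omega) (by omega) ∈ elemWallVerts w w := by
  rcases Nat.even_or_odd r with he | ho
  · have h2' : r % 2 = 0 := Nat.even_iff.1 he
    exact mem_verts_of_pair
      (q1 := wv w r (2*w-2) (by omega) (by omega)) (q2 := wv w (r-1) (2*w-1) (by omega) (by omega))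
      (preWall_adj_mk _ _ _ _ (by omega)) (preWall_adj_mk _ _ _ _ (by omega)) (wv_ne (by omega))
  · have h2' : r % 2 = 1 := Nat.odd_iff.1 ho
    exact mem_verts_of_pair
      (q1 := wv w r (2*w-2) (by omega) (by omega)) (q2 := wv w (r+1) (2*w-1) (by omega) (by omega))
      (preWall_adj_mk _ _ _ _ (by omega)) (preWall_adj_mk _ _ _ _ (by omega)) (wv_ne (by omega))

end CFA

namespace CFA
open SimpleGraph
variable {w : ℕ}

lemma elemWall_adj {u v : ↥(elemWallVerts w w)} :
    (elemWall w w).Adj u v ↔ (preWall w w).Adj u.1 v.1 := by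
  simp [elemWall]

lemma peg_of_pair {v n1 n2 : ↥(elemWallVerts w w)}
    (h1 : (preWall w w).Adj v.1 n1.1) (h2 : (preWall w w).Adj v.1 n2.1) (hne : n1 ≠ n2)
    (hall : ∀ u : Fin w × Fin (2*w), (preWall w w).Adj v.1 u → u = n1.1 ∨ u = n2.1) :
    v ∈ elemWallPegs w w := by
  have hset : (elemWall w w).neighborSet v = {n1, n2} := by
    ext u
    simp only [mem_neighborSet, Set.mem_insert_iff, Set.mem_singleton_iff]
    constructor
    · intro h
      rcases hall u.1 (elemWall_adj.1 h) with h' | h'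
      · exact Or.inl (Subtype.ext h')
      · exact Or.inr (Subtype.ext h')
    · rintro (rfl | rfl) <;> exact elemWall_adj.2 (by assumption)
  show ((elemWall w w).neighborSet v).ncard = 2
  rw [hset]
  exact Set.ncard_pair hne

/-- decode adjacency into coordinate facts -/
lemma preWall_adj_coords {p q : Fin w × Fin (2*w)} (h : (preWall w w).Adj p q) :
    ¬(p.1.val = q.1.val ∧ p.2.val = q.2.val) ∧
    ((p.1.val = q.1.val ∧ q.2.val = p.2.val + 1) ∨
     (p.2.val = q.2.val ∧ q.1.val = p.1.val + 1 ∧ p.1.val % 2 = p.2.val % 2) ∨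
     (q.1.val = p.1.val ∧ p.2.val = q.2.val + 1) ∨
     (q.2.val = p.2.val ∧ p.1.val = q.1.val + 1 ∧ q.1.val % 2 = q.2.val % 2)) :=
  preWall_adj_iff.1 h

lemma eq_of_coords {u : Fin w × Fin (2*w)} {r c : ℕ} {hr : r < w} {hc : c < 2*w}
    (h1 : u.1.val = r) (h2 : u.2.val = c) : u = wv w r c hr hc := by
  apply Prod.ext <;> apply Fin.ext <;> simpa [wv]

lemma pegL (hw : 3 ≤ w) {r : ℕ} (h1 : 1 ≤ r) (h2 : r ≤ w-2)
    (hv : wv w r 0 (by omega) (by omega) ∈ elemWallVerts w w) :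
    (⟨wv w r 0 (by omega) (by omega), hv⟩ : ↥(elemWallVerts w w)) ∈ elemWallPegs w w := by
  rcases Nat.even_or_odd r with he | ho
  · have hr2 : r % 2 = 0 := Nat.even_iff.1 he
    refine peg_of_pair (n1 := ⟨wv w r 1 (by omega) (by omega), mem_mid hw (by omega) (by omega) (by omega)⟩)
      (n2 := ⟨wv w (r+1) 0 (by omega) (by omega), mem_verts_of_pair
        (q1 := wv w r 0 (by omega) (by omega)) (q2 := wv w (r+1) 1 (by omega) (by omega))
        (preWall_adj_mk _ _ _ _ (by omega)) (preWall_adj_mk _ _ _ _ (by omega)) (wv_ne (by omega))⟩)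
      (preWall_adj_mk _ _ _ _ (by omega)) (preWall_adj_mk _ _ _ _ (by omega))
      (by intro hcon; rw [Subtype.ext_iff] at hcon; exact wv_ne (by omega) hcon) ?_
    intro u hu
    have := preWall_adj_coords hu
    simp only [wv] at this
    have hlt1 : u.1.val < w := u.1.isLt
    have hlt2 : u.2.val < 2*w := u.2.isLt
    rcases (by omega : (u.1.val = r ∧ u.2.val = 1) ∨ (u.1.val = r+1 ∧ u.2.val = 0)) with ⟨e1, e2⟩ | ⟨e1, e2⟩
    · exact Or.inl (eq_of_coords e1 e2)
    · exact Or.inr (eq_of_coords e1 e2)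
  · have hr2 : r % 2 = 1 := Nat.odd_iff.1 ho
    refine peg_of_pair (n1 := ⟨wv w r 1 (by omega) (by omega), mem_mid hw (by omega) (by omega) (by omega)⟩)
      (n2 := ⟨wv w (r-1) 0 (by omega) (by omega), mem_verts_of_pair
        (q1 := wv w r 0 (by omega) (by omega)) (q2 := wv w (r-1) 1 (by omega) (by omega))
        (preWall_adj_mk _ _ _ _ (by omega)) (preWall_adj_mk _ _ _ _ (by omega)) (wv_ne (by omega))⟩)
      (preWall_adj_mk _ _ _ _ (by omega)) (preWall_adj_mk _ _ _ _ (by omega))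
      (by intro hcon; rw [Subtype.ext_iff] at hcon; exact wv_ne (by omega) hcon) ?_
    intro u hu
    have := preWall_adj_coords hu
    simp only [wv] at this
    have hlt1 : u.1.val < w := u.1.isLt
    have hlt2 : u.2.val < 2*w := u.2.isLt
    rcases (by omega : (u.1.val = r ∧ u.2.val = 1) ∨ (u.1.val = r-1 ∧ u.2.val = 0)) with ⟨e1, e2⟩ | ⟨e1, e2⟩
    · exact Or.inl (eq_of_coords e1 e2)
    · exact Or.inr (eq_of_coords e1 e2)

end CFA

namespace CFA
open SimpleGraph
variable {w : ℕ}

lemma pegR (hw : 3 ≤ w) {r : ℕ} (h1 : 1 ≤ r) (h2 : r ≤ w-2)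
    (hv : wv w r (2*w-1) (by omega) (by omega) ∈ elemWallVerts w w) :
    (⟨wv w r (2*w-1) (by omega) (by omega), hv⟩ : ↥(elemWallVerts w w)) ∈ elemWallPegs w w := by
  rcases Nat.even_or_odd r with he | ho
  · have hr2 : r % 2 = 0 := Nat.even_iff.1 he
    refine peg_of_pair
      (n1 := ⟨wv w r (2*w-2) (by omega) (by omega), mem_mid hw (by omega) (by omega) (by omega)⟩)
      (n2 := ⟨wv w (r-1) (2*w-1) (by omega) (by omega), mem_verts_of_pair
        (q1 := wv w r (2*w-1) (by omega) (by omega)) (q2 := wv w (r-1) (2*w-2) (by omega) (by omega))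
        (preWall_adj_mk _ _ _ _ (by omega)) (preWall_adj_mk _ _ _ _ (by omega)) (wv_ne (by omega))⟩)
      (preWall_adj_mk _ _ _ _ (by omega)) (preWall_adj_mk _ _ _ _ (by omega))
      (by intro hcon; rw [Subtype.ext_iff] at hcon; exact wv_ne (by omega) hcon) ?_
    intro u hu
    have := preWall_adj_coords hu
    simp only [wv] at this
    have hlt1 : u.1.val < w := u.1.isLt
    have hlt2 : u.2.val < 2*w := u.2.isLt
    rcases (by omega : (u.1.val = r ∧ u.2.val = 2*w-2) ∨ (u.1.val = r-1 ∧ u.2.val = 2*w-1)) with ⟨e1, e2⟩ | ⟨e1, e2⟩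
    · exact Or.inl (eq_of_coords e1 e2)
    · exact Or.inr (eq_of_coords e1 e2)
  · have hr2 : r % 2 = 1 := Nat.odd_iff.1 ho
    refine peg_of_pair
      (n1 := ⟨wv w r (2*w-2) (by omega) (by omega), mem_mid hw (by omega) (by omega) (by omega)⟩)
      (n2 := ⟨wv w (r+1) (2*w-1) (by omega) (by omega), mem_verts_of_pair
        (q1 := wv w r (2*w-1) (by omega) (by omega)) (q2 := wv w (r+1) (2*w-2) (by omega) (by omega))
        (preWall_adj_mk _ _ _ _ (by omega)) (preWall_adj_mk _ _ _ _ (by omega)) (wv_ne (by omega))⟩)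
      (preWall_adj_mk _ _ _ _ (by omega)) (preWall_adj_mk _ _ _ _ (by omega))
      (by intro hcon; rw [Subtype.ext_iff] at hcon; exact wv_ne (by omega) hcon) ?_
    intro u hu
    have := preWall_adj_coords hu
    simp only [wv] at this
    have hlt1 : u.1.val < w := u.1.isLt
    have hlt2 : u.2.val < 2*w := u.2.isLt
    rcases (by omega : (u.1.val = r ∧ u.2.val = 2*w-2) ∨ (u.1.val = r+1 ∧ u.2.val = 2*w-1)) with ⟨e1, e2⟩ | ⟨e1, e2⟩
    · exact Or.inl (eq_of_coords e1 e2)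
    · exact Or.inr (eq_of_coords e1 e2)

lemma pegT (hw : 3 ≤ w) {c : ℕ} (h1 : 3 ≤ c) (h2 : c ≤ 2*w-3) (h3 : c % 2 = 1)
    (hv : wv w 0 c (by omega) (by omega) ∈ elemWallVerts w w) :
    (⟨wv w 0 c (by omega) (by omega), hv⟩ : ↥(elemWallVerts w w)) ∈ elemWallPegs w w := by
  refine peg_of_pair
    (n1 := ⟨wv w 0 (c-1) (by omega) (by omega), mem_mid hw (by omega) (by omega) (by omega)⟩)
    (n2 := ⟨wv w 0 (c+1) (by omega) (by omega), mem_mid hw (by omega) (by omega) (by omega)⟩)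
    (preWall_adj_mk _ _ _ _ (by omega)) (preWall_adj_mk _ _ _ _ (by omega))
    (by intro hcon; rw [Subtype.ext_iff] at hcon; exact wv_ne (by omega) hcon) ?_
  intro u hu
  have := preWall_adj_coords hu
  simp only [wv] at this
  have hlt1 : u.1.val < w := u.1.isLt
  have hlt2 : u.2.val < 2*w := u.2.isLt
  rcases (by omega : (u.1.val = 0 ∧ u.2.val = c-1) ∨ (u.1.val = 0 ∧ u.2.val = c+1)) with ⟨e1, e2⟩ | ⟨e1, e2⟩
  · exact Or.inl (eq_of_coords e1 e2)
  · exact Or.inr (eq_of_coords e1 e2)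

lemma pegB (hw : 3 ≤ w) {c : ℕ} (h1 : 2 ≤ c) (h2 : c ≤ 2*w-3) (h3 : c % 2 ≠ (w-2) % 2)
    (hv : wv w (w-1) c (by omega) (by omega) ∈ elemWallVerts w w) :
    (⟨wv w (w-1) c (by omega) (by omega), hv⟩ : ↥(elemWallVerts w w)) ∈ elemWallPegs w w := by
  refine peg_of_pair
    (n1 := ⟨wv w (w-1) (c-1) (by omega) (by omega), mem_mid hw (by omega) (by omega) (by omega)⟩)
    (n2 := ⟨wv w (w-1) (c+1) (by omega) (by omega), mem_mid hw (by omega) (by omega) (by omega)⟩)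
    (preWall_adj_mk _ _ _ _ (by omega)) (preWall_adj_mk _ _ _ _ (by omega))
    (by intro hcon; rw [Subtype.ext_iff] at hcon; exact wv_ne (by omega) hcon) ?_
  intro u hu
  have := preWall_adj_coords hu
  simp only [wv] at this
  have hlt1 : u.1.val < w := u.1.isLt
  have hlt2 : u.2.val < 2*w := u.2.isLt
  rcases (by omega : (u.1.val = w-1 ∧ u.2.val = c-1) ∨ (u.1.val = w-1 ∧ u.2.val = c+1)) with ⟨e1, e2⟩ | ⟨e1, e2⟩
  · exact Or.inl (eq_of_coords e1 e2)
  · exact Or.inr (eq_of_coords e1 e2)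

end CFA

namespace CFA
open SimpleGraph
variable {w : ℕ}

def colLo (j : ℕ) : ℕ := if j = 0 then 0 else 2*j+2
def colHi (w j : ℕ) : ℕ := if j = w-3 then 2*w-1 else 2*j+3

def BSet (w i j : ℕ) : Set (ℕ × ℕ) :=
  {p | (p.1 = i+1 ∧ colLo j ≤ p.2 ∧ p.2 ≤ colHi w j) ∨
       (i = 0 ∧ p.1 = 0 ∧ 2*j+2 ≤ p.2 ∧ p.2 ≤ 2*j+3) ∨
       (i = w-3 ∧ p.1 = w-1 ∧ 2*j+2 ≤ p.2 ∧ p.2 ≤ 2*j+3)}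

lemma col_iff {j c : ℕ} (hw : 3 ≤ w) (hj : j ≤ w-3) :
    (colLo j ≤ c ∧ c ≤ colHi w j) ↔
    ((2*j+2 ≤ c ∧ c ≤ 2*j+3) ∨ (j = 0 ∧ c ≤ 1) ∨ (j = w-3 ∧ 2*w-2 ≤ c ∧ c ≤ 2*w-1)) := by
  unfold colLo colHi
  split_ifs <;> omega

lemma BSet_iff {i j : ℕ} {p : ℕ × ℕ} (hw : 3 ≤ w) (hj : j ≤ w-3) :
    p ∈ BSet w i j ↔
    ((p.1 = i+1 ∧ ((2*j+2 ≤ p.2 ∧ p.2 ≤ 2*j+3) ∨ (j = 0 ∧ p.2 ≤ 1) ∨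
        (j = w-3 ∧ 2*w-2 ≤ p.2 ∧ p.2 ≤ 2*w-1))) ∨
     (i = 0 ∧ p.1 = 0 ∧ 2*j+2 ≤ p.2 ∧ p.2 ≤ 2*j+3) ∨
     (i = w-3 ∧ p.1 = w-1 ∧ 2*j+2 ≤ p.2 ∧ p.2 ≤ 2*j+3)) := by
  unfold BSet
  simp only [Set.mem_setOf_eq, col_iff hw hj]

lemma BSet_bounds {i j : ℕ} {p : ℕ × ℕ} (hw : 3 ≤ w) (hi : i ≤ w-3) (hj : j ≤ w-3)
    (h : p ∈ BSet w i j) : p.1 < w ∧ p.2 < 2*w := by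
  rw [BSet_iff hw hj] at h
  omega

lemma BSet_mem_verts {i j : ℕ} {p : ℕ × ℕ} (hw : 3 ≤ w) (hi : i ≤ w-3) (hj : j ≤ w-3)
    (h : p ∈ BSet w i j) :
    wv w p.1 p.2 (BSet_bounds hw hi hj h).1 (BSet_bounds hw hi hj h).2 ∈ elemWallVerts w w := by
  rw [BSet_iff hw hj] at h
  rcases h with ⟨h1, h2⟩ | ⟨h1, h2, h3⟩ | ⟨h1, h2, h3⟩
  · -- main row, r = i+1 ∈ [1, w-2]
    by_cases hc0 : p.2 = 0
    · have := mem_col0 hw (r := p.1) (by omega) (by omega)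
      convert this using 2 <;> omega
    · by_cases hcL : p.2 = 2*w-1
      · have := mem_colLast hw (r := p.1) (by omega) (by omega)
        convert this using 2 <;> omega
      · exact mem_mid hw _ (by omega) (by omega)
  · exact mem_mid hw _ (by omega) (by omega)
  · exact mem_mid hw _ (by omega) (by omega)

lemma BSet_disjoint {i j i' j' : ℕ} {p : ℕ × ℕ} (hw : 3 ≤ w)
    (hi : i ≤ w-3) (hj : j ≤ w-3) (hi' : i' ≤ w-3) (hj' : j' ≤ w-3)
    (hne : ¬(i = i' ∧ j = j')) (h : p ∈ BSet w i j) (h' : p ∈ BSet w i' j') : False := by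
  rw [BSet_iff hw hj] at h
  rw [BSet_iff hw hj'] at h'
  omega

end CFA

namespace CFA
open SimpleGraph
variable {w : ℕ}

def PS (w i j : ℕ) : Set ↥(elemWallVerts w w) :=
  {v | (v.1.1.val, v.1.2.val) ∈ BSet w i j}

variable {i j : ℕ}

def mkv (hw : 3 ≤ w) (hi : i ≤ w-3) (hj : j ≤ w-3) (r c : ℕ) (h : (r,c) ∈ BSet w i j) :
    ↥(elemWallVerts w w) :=
  ⟨wv w r c (BSet_bounds hw hi hj h).1 (BSet_bounds hw hi hj h).2, BSet_mem_verts hw hi hj h⟩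

lemma mkv_mem {hw : 3 ≤ w} {hi : i ≤ w-3} {hj : j ≤ w-3} {r c : ℕ} (h : (r,c) ∈ BSet w i j) :
    mkv hw hi hj r c h ∈ PS w i j := h

variable {hw : 3 ≤ w} {hi : i ≤ w-3} {hj : j ≤ w-3}

lemma mkv_congr {r c r' c' : ℕ} (h : (r,c) ∈ BSet w i j) (h' : (r',c') ∈ BSet w i j)
    (e1 : r = r') (e2 : c = c') :
    (⟨mkv hw hi hj r c h, mkv_mem h⟩ : ↥(PS w i j)) = ⟨mkv hw hi hj r' c' h', mkv_mem h'⟩ := by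
  subst e1; subst e2; rfl

lemma stepAdj {r c r' c' : ℕ} (h : (r,c) ∈ BSet w i j) (h' : (r',c') ∈ BSet w i j)
    (hraw : (r = r' ∧ (c' = c+1 ∨ c = c'+1)) ∨
      (c = c' ∧ ((r' = r+1 ∧ r % 2 = c % 2) ∨ (r = r'+1 ∧ r' % 2 = c % 2)))) :
    ((elemWall w w).induce (PS w i j)).Adj
      ⟨mkv hw hi hj r c h, mkv_mem h⟩ ⟨mkv hw hi hj r' c' h', mkv_mem h'⟩ := by
  have hpre := preWall_adj_mk (w := w) (BSet_bounds hw hi hj h).1 (BSet_bounds hw hi hj h).2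
    (BSet_bounds hw hi hj h').1 (BSet_bounds hw hi hj h').2 hraw
  simpa [elemWall, mkv] using hpre

lemma mainMem (hw' : 3 ≤ w) (hj' : j ≤ w-3) {c : ℕ} (h1 : colLo j ≤ c) (h2 : c ≤ colHi w j) :
    ((i+1 : ℕ), c) ∈ BSet w i j := Or.inl ⟨rfl, h1, h2⟩

lemma rowReachAux : ∀ (d c : ℕ) (hc : colLo j ≤ c) (hcd : c + d ≤ colHi w j),
    ((elemWall w w).induce (PS w i j)).Reachable
      ⟨mkv hw hi hj (i+1) (c+d) (mainMem hw hj (by omega) hcd), mkv_mem _⟩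
      ⟨mkv hw hi hj (i+1) c (mainMem hw hj hc (by omega)), mkv_mem _⟩ := by
  intro d
  induction d with
  | zero => intro c hc hcd; exact Reachable.refl _
  | succ d ih =>
    intro c hc hcd
    have h1 : ((i+1 : ℕ), c+(d+1)) ∈ BSet w i j := mainMem hw hj (by omega) hcd
    have h2 : ((i+1 : ℕ), c+d) ∈ BSet w i j := mainMem hw hj (by omega) (by omega)
    have hadj := stepAdj (hw := hw) (hi := hi) (hj := hj) h1 h2 (by omega)
    exact hadj.reachable.trans (ih c hc (by omega))

lemma rowConnect {c c' : ℕ} (hc1 : colLo j ≤ c) (hc2 : c ≤ colHi w j)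
    (hc1' : colLo j ≤ c') (hc2' : c' ≤ colHi w j) :
    ((elemWall w w).induce (PS w i j)).Reachable
      ⟨mkv hw hi hj (i+1) c (mainMem hw hj hc1 hc2), mkv_mem _⟩
      ⟨mkv hw hi hj (i+1) c' (mainMem hw hj hc1' hc2'), mkv_mem _⟩ := by
  rcases le_or_gt c' c with hle | hlt
  · have := rowReachAux (hw := hw) (hi := hi) (hj := hj) (c - c') c' hc1' (by omega)
    have he := mkv_congr (hw := hw) (hi := hi) (hj := hj)
      (mainMem hw hj (by omega) (by omega : c' + (c - c') ≤ colHi w j))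
      (mainMem hw hj hc1 hc2) rfl (by omega)
    exact (he ▸ this)
  · have := rowReachAux (hw := hw) (hi := hi) (hj := hj) (c' - c) c hc1 (by omega)
    have he := mkv_congr (hw := hw) (hi := hi) (hj := hj)
      (mainMem hw hj (by omega) (by omega : c + (c' - c) ≤ colHi w j))
      (mainMem hw hj hc1' hc2') rfl (by omega)
    exact (he ▸ this).symm

lemma anchorMem (hw' : 3 ≤ w) (hj' : j ≤ w-3) : ((i+1 : ℕ), 2*j+2) ∈ BSet w i j :=
  mainMem hw' hj' (by unfold colLo; split <;> omega) (by unfold colHi; split <;> omega)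

lemma colLo_le (hj' : j ≤ w-3) : colLo j ≤ 2*j+2 := by unfold colLo; split <;> omega
lemma colHi_ge (hw' : 3 ≤ w) (hj' : j ≤ w-3) : 2*j+3 ≤ colHi w j := by
  unfold colHi; split <;> omega

lemma reachAnchor : ∀ (r c : ℕ) (h : (r,c) ∈ BSet w i j),
    ((elemWall w w).induce (PS w i j)).Reachable
      ⟨mkv hw hi hj r c h, mkv_mem h⟩
      ⟨mkv hw hi hj (i+1) (2*j+2) (anchorMem hw hj), mkv_mem _⟩ := by
  intro r c h
  have hh := h
  rcases hh with ⟨h1, h2, h3⟩ | ⟨h1, h2, h3, h4⟩ | ⟨h1, h2, h3, h4⟩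
  · -- main row
    have hbc : ((i+1 : ℕ), c) ∈ BSet w i j := mainMem hw hj h2 h3
    rw [mkv_congr h hbc h1 rfl]
    exact rowConnect (hw := hw) (hi := hi) (hj := hj) h2 h3 (colLo_le hj)
      (le_trans (show 2*j+2 ≤ 2*j+3 by omega) (colHi_ge hw hj))
  · -- top row : i = 0, r = 0
    have hbc : ((0 : ℕ), c) ∈ BSet w i j := Or.inr (Or.inl ⟨h1, rfl, h3, h4⟩)
    rw [mkv_congr h hbc h2 rfl]
    have hb2 : ((0:ℕ), 2*j+2) ∈ BSet w i j := Or.inr (Or.inl ⟨h1, rfl, by omega, by omega⟩)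
    have hbm : ((i+1 : ℕ), 2*j+2) ∈ BSet w i j := anchorMem hw hj
    have step2 : ((elemWall w w).induce (PS w i j)).Adj
        ⟨mkv hw hi hj 0 (2*j+2) hb2, mkv_mem _⟩ ⟨mkv hw hi hj (i+1) (2*j+2) hbm, mkv_mem _⟩ :=
      stepAdj _ _ (by omega)
    by_cases hc : c = 2*j+2
    · rw [mkv_congr hbc hb2 rfl hc]
      exact step2.reachable
    · have hc3 : c = 2*j+3 := by omega
      have hb3 : ((0:ℕ), 2*j+3) ∈ BSet w i j := Or.inr (Or.inl ⟨h1, rfl, by omega, by omega⟩)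
      rw [mkv_congr hbc hb3 rfl hc3]
      have step1 : ((elemWall w w).induce (PS w i j)).Adj
          ⟨mkv hw hi hj 0 (2*j+3) hb3, mkv_mem _⟩ ⟨mkv hw hi hj 0 (2*j+2) hb2, mkv_mem _⟩ :=
        stepAdj _ _ (by omega)
      exact step1.reachable.trans step2.reachable
  · -- bottom row : i = w-3, r = w-1
    have hbc : ((w-1 : ℕ), c) ∈ BSet w i j := Or.inr (Or.inr ⟨h1, rfl, h3, h4⟩)
    rw [mkv_congr h hbc h2 rfl]
    set cs := 2*j+2 + (w-2) % 2 with hcs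
    have hbs : ((w-1 : ℕ), cs) ∈ BSet w i j := Or.inr (Or.inr ⟨h1, rfl, by omega, by omega⟩)
    have hbm : ((i+1 : ℕ), cs) ∈ BSet w i j :=
      mainMem hw hj (le_trans (colLo_le hj) (show 2*j+2 ≤ cs by omega))
        (le_trans (show cs ≤ 2*j+3 by omega) (colHi_ge hw hj))
    have stepv : ((elemWall w w).induce (PS w i j)).Adj
        ⟨mkv hw hi hj (w-1) cs hbs, mkv_mem _⟩ ⟨mkv hw hi hj (i+1) cs hbm, mkv_mem _⟩ :=
      stepAdj _ _ (by omega)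
    have hrow := rowConnect (hw := hw) (hi := hi) (hj := hj)
      (le_trans (colLo_le hj) (show 2*j+2 ≤ cs by omega))
      (le_trans (show cs ≤ 2*j+3 by omega) (colHi_ge hw hj))
      (colLo_le hj) (le_trans (show 2*j+2 ≤ 2*j+3 by omega) (colHi_ge hw hj))
    have tail := stepv.reachable.trans hrow
    by_cases hc : c = cs
    · rw [mkv_congr hbc hbs rfl hc]
      exact tail
    · have steph : ((elemWall w w).induce (PS w i j)).Adj
          ⟨mkv hw hi hj (w-1) c hbc, mkv_mem _⟩ ⟨mkv hw hi hj (w-1) cs hbs, mkv_mem _⟩ :=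
        stepAdj _ _ (by omega)
      exact steph.reachable.trans tail

lemma phi_connected (hw' : 3 ≤ w) (hi' : i ≤ w-3) (hj' : j ≤ w-3) :
    ((elemWall w w).induce (PS w i j)).Connected := by
  apply induce_connected_of_reach (a := mkv hw' hi' hj' (i+1) (2*j+2) (anchorMem hw' hj'))
    (mkv_mem _)
  intro x hx
  have hx' : (x.1.1.val, x.1.2.val) ∈ BSet w i j := hx
  have hxe : (⟨x, hx⟩ : ↥(PS w i j)) = ⟨mkv hw' hi' hj' x.1.1.val x.1.2.val hx', mkv_mem _⟩ := by
    apply Subtype.ext; apply Subtype.ext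
    apply Prod.ext <;> apply Fin.ext <;> rfl
  rw [hxe]
  exact reachAnchor (hw := hw') (hi := hi') (hj := hj') _ _ hx'

end CFA

namespace CFA
open SimpleGraph
variable {w : ℕ}

lemma phi_disj (hw : 3 ≤ w) {a b : Fin (w-2) × Fin (w-2)} (hne : a ≠ b) :
    Disjoint (PS w a.1.val a.2.val) (PS w b.1.val b.2.val) := by
  rw [Set.disjoint_left]
  intro v hva hvb
  have hi : a.1.val ≤ w-3 := by have := a.1.isLt; omega
  have hj : a.2.val ≤ w-3 := by have := a.2.isLt; omega
  have hi' : b.1.val ≤ w-3 := by have := b.1.isLt; omega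
  have hj' : b.2.val ≤ w-3 := by have := b.2.isLt; omega
  refine BSet_disjoint hw hi hj hi' hj' ?_ hva hvb
  intro ⟨e1, e2⟩
  exact hne (Prod.ext (Fin.ext e1) (Fin.ext e2))

lemma phi_adj (hw : 3 ≤ w) {a b : Fin (w-2) × Fin (w-2)}
    (hab : (gridGraph (w-2) (w-2)).Adj a b) :
    ∃ x ∈ PS w a.1.val a.2.val, ∃ y ∈ PS w b.1.val b.2.val, (elemWall w w).Adj x y := by
  have hi : a.1.val ≤ w-3 := by have := a.1.isLt; omega
  have hj : a.2.val ≤ w-3 := by have := a.2.isLt; omega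
  have hi' : b.1.val ≤ w-3 := by have := b.1.isLt; omega
  have hj' : b.2.val ≤ w-3 := by have := b.2.isLt; omega
  set i := a.1.val; set j := a.2.val; set i' := b.1.val; set j' := b.2.val
  rcases gridGraph_adj_iff.1 hab with ⟨hne, hrel⟩
  rcases hrel with ⟨e1, e2⟩ | ⟨e1, e2⟩ | ⟨e1, e2⟩ | ⟨e1, e2⟩
  · -- horizontal : j' = j+1
    have hx : ((i+1 : ℕ), 2*j+3) ∈ BSet w i j := (BSet_iff hw hj).2 (by omega)
    have hy : ((i'+1 : ℕ), 2*j'+2) ∈ BSet w i' j' := (BSet_iff hw hj').2 (by omega)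
    exact ⟨mkv hw hi hj _ _ hx, hx, mkv hw hi' hj' _ _ hy, hy,
      elemWall_adj.2 (preWall_adj_mk _ _ _ _ (by omega))⟩
  · -- vertical : i' = i+1
    have hx : ((i+1 : ℕ), 2*j+2 + (i+1) % 2) ∈ BSet w i j := (BSet_iff hw hj).2 (by omega)
    have hy : ((i'+1 : ℕ), 2*j+2 + (i+1) % 2) ∈ BSet w i' j' := (BSet_iff hw hj').2 (by omega)
    exact ⟨mkv hw hi hj _ _ hx, hx, mkv hw hi' hj' _ _ hy, hy,
      elemWall_adj.2 (preWall_adj_mk _ _ _ _ (by omega))⟩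
  · -- horizontal mirrored : j = j'+1
    have hx : ((i+1 : ℕ), 2*j+2) ∈ BSet w i j := (BSet_iff hw hj).2 (by omega)
    have hy : ((i'+1 : ℕ), 2*j'+3) ∈ BSet w i' j' := (BSet_iff hw hj').2 (by omega)
    exact ⟨mkv hw hi hj _ _ hx, hx, mkv hw hi' hj' _ _ hy, hy,
      elemWall_adj.2 (preWall_adj_mk _ _ _ _ (by omega))⟩
  · -- vertical mirrored : i = i'+1
    have hx : ((i+1 : ℕ), 2*j+2 + (i'+1) % 2) ∈ BSet w i j := (BSet_iff hw hj).2 (by omega)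
    have hy : ((i'+1 : ℕ), 2*j+2 + (i'+1) % 2) ∈ BSet w i' j' := (BSet_iff hw hj').2 (by omega)
    exact ⟨mkv hw hi hj _ _ hx, hx, mkv hw hi' hj' _ _ hy, hy,
      elemWall_adj.2 (preWall_adj_mk _ _ _ _ (by omega))⟩

lemma phi_peg (hw : 3 ≤ w) (a : Fin (w-2) × Fin (w-2))
    (hbd : a.1.val = 0 ∨ a.1.val = w-3 ∨ a.2.val = 0 ∨ a.2.val = w-3) :
    ∃ p ∈ elemWallPegs w w, p ∈ PS w a.1.val a.2.val := by
  have hi : a.1.val ≤ w-3 := by have := a.1.isLt; omega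
  have hj : a.2.val ≤ w-3 := by have := a.2.isLt; omega
  set i := a.1.val; set j := a.2.val
  by_cases hj0 : j = 0
  · have hb : ((i+1 : ℕ), 0) ∈ BSet w i j := (BSet_iff hw hj).2 (by omega)
    exact ⟨mkv hw hi hj _ _ hb, pegL hw (by omega) (by omega) _, hb⟩
  · by_cases hjL : j = w-3
    · have hb : ((i+1 : ℕ), 2*w-1) ∈ BSet w i j := (BSet_iff hw hj).2 (by omega)
      exact ⟨mkv hw hi hj _ _ hb, pegR hw (by omega) (by omega) _, hb⟩
    · by_cases hi0 : i = 0
      · have hb : ((0 : ℕ), 2*j+3) ∈ BSet w i j := (BSet_iff hw hj).2 (by omega)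
        exact ⟨mkv hw hi hj _ _ hb, pegT hw (by omega) (by omega) (by omega) _, hb⟩
      · have hiL : i = w-3 := by omega
        have hb : ((w-1 : ℕ), 2*j+2 + (w-1) % 2) ∈ BSet w i j := (BSet_iff hw hj).2 (by omega)
        exact ⟨mkv hw hi hj _ _ hb, pegB hw (by omega) (by omega) (by omega) _, hb⟩

end CFA

namespace CFA
open SimpleGraph

section transfer
variable {γ V : Type*} {K : SimpleGraph γ} {wallG G : SimpleGraph V}

/-- branch set in `G` induced by a branch set `A` in `K` via a TM-witness. -/
def TSet (wt : TMWitness K wallG) (enc : γ → ℕ) (A : Set γ) : Set V :=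
  {v | (∃ x ∈ A, v = wt.emb x) ∨
    ∃ x y, ∃ h : K.Adj x y, x ∈ A ∧ enc x < enc y ∧
      v ∈ (wt.path h).support ∧ v ≠ wt.emb x ∧ v ≠ wt.emb y}

variable (wt : TMWitness K wallG) (enc : γ → ℕ)

lemma emb_mem_TSet {A : Set γ} {x : γ} (hx : x ∈ A) : wt.emb x ∈ TSet wt enc A :=
  Or.inl ⟨x, hx, rfl⟩

lemma internal_mem_TSet (henc : Function.Injective enc) {A : Set γ} {x y : γ}
    (h : K.Adj x y) (hx : x ∈ A) (hy : y ∈ A) {v : V}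
    (hv : v ∈ (wt.path h).support) (h1 : v ≠ wt.emb x) (h2 : v ≠ wt.emb y) :
    v ∈ TSet wt enc A := by
  rcases Nat.lt_or_ge (enc x) (enc y) with hlt | hge
  · exact Or.inr ⟨x, y, h, hx, hlt, hv, h1, h2⟩
  · have hne : enc y ≠ enc x := fun e => h.ne (henc e).symm
    have hv' : v ∈ (wt.path h.symm).support := by
      rw [wt.rev h, SimpleGraph.Walk.support_reverse]
      exact List.mem_reverse.2 hv
    exact Or.inr ⟨y, x, h.symm, hy, by omega, hv', h2, h1⟩

lemma path_support_sub_TSet (henc : Function.Injective enc) {A : Set γ} {x y : γ}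
    (h : K.Adj x y) (hx : x ∈ A) (hy : y ∈ A) :
    ∀ z ∈ (wt.path h).support, z ∈ TSet wt enc A := by
  intro z hz
  by_cases h1 : z = wt.emb x
  · exact h1 ▸ emb_mem_TSet wt enc hx
  · by_cases h2 : z = wt.emb y
    · exact h2 ▸ emb_mem_TSet wt enc hy
    · exact internal_mem_TSet wt enc henc h hx hy hz h1 h2

lemma emb_reach (hle : wallG ≤ G) (henc : Function.Injective enc) {A : Set γ} {x y : γ}
    (h : K.Adj x y) (hx : x ∈ A) (hy : y ∈ A) :
    (G.induce (TSet wt enc A)).Reachable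
      ⟨wt.emb x, emb_mem_TSet wt enc hx⟩ ⟨wt.emb y, emb_mem_TSet wt enc hy⟩ :=
  reach_induce_of_walk hle (wt.path h) (path_support_sub_TSet wt enc henc h hx hy) _ _

lemma emb_reach_of_walk (hle : wallG ≤ G) (henc : Function.Injective enc) {A : Set γ} :
    ∀ {x y : γ} (p : K.Walk x y) (_ : ∀ z ∈ p.support, z ∈ A) (hx : x ∈ A) (hy : y ∈ A),
    (G.induce (TSet wt enc A)).Reachable
      ⟨wt.emb x, emb_mem_TSet wt enc hx⟩ ⟨wt.emb y, emb_mem_TSet wt enc hy⟩ := by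
  intro x y p
  induction p with
  | nil => intro _ _ _; exact Reachable.refl _
  | @cons a b c h q ih =>
    intro hp hx hy
    have hb : b ∈ A := hp b (by simp)
    exact (emb_reach wt enc hle henc h hx hb).trans
      (ih (fun z hz => hp z (by simp [hz])) hb hy)

lemma TSet_conn (hle : wallG ≤ G) (henc : Function.Injective enc) {A : Set γ}
    (hconn : (K.induce A).Connected) : (G.induce (TSet wt enc A)).Connected := by
  obtain ⟨⟨x₀, hx₀⟩⟩ := hconn.nonempty
  apply induce_connected_of_reach (a := wt.emb x₀) (emb_mem_TSet wt enc hx₀)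
  intro v hv
  have main : ∀ (x : γ) (hx : x ∈ A), (G.induce (TSet wt enc A)).Reachable
      ⟨wt.emb x, emb_mem_TSet wt enc hx⟩ ⟨wt.emb x₀, emb_mem_TSet wt enc hx₀⟩ := by
    intro x hx
    obtain ⟨q, hq⟩ := exists_walk_of_induce (hconn.preconnected ⟨x, hx⟩ ⟨x₀, hx₀⟩).some
    exact emb_reach_of_walk wt enc hle henc q hq hx hx₀
  rcases hv with ⟨x, hx, rfl⟩ | ⟨x, y, h, hx, hexy, hsup, hnx, hny⟩
  · exact main x hx
  · have hreach := reach_prefix hle (wt.path h) (wt.isPath h) (emb_mem_TSet wt enc hx)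
      (fun z hz hzy => by
        by_cases h1 : z = wt.emb x
        · exact h1 ▸ emb_mem_TSet wt enc hx
        · exact Or.inr ⟨x, y, h, hx, hexy, hz, h1, hzy⟩)
      v hsup (Or.inr ⟨x, y, h, hx, hexy, hsup, hnx, hny⟩) hny
    exact hreach.symm.trans (main x hx)

lemma TSet_disj (henc : Function.Injective enc) {A B : Set γ} (hAB : Disjoint A B) :
    Disjoint (TSet wt enc A) (TSet wt enc B) := by
  rw [Set.disjoint_left]
  rintro v hvA hvB
  rcases hvA with ⟨x, hx, rfl⟩ | ⟨x, y, h, hx, hexy, hsup, hnx, hny⟩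
  · rcases hvB with ⟨x', hx', he⟩ | ⟨c, d, h₂, hc, hecd, hsup₂, hnc, hnd⟩
    · have : x = x' := wt.inj he
      subst this
      exact (Set.disjoint_left.1 hAB hx) hx'
    · rcases wt.branch h₂ x hsup₂ with rfl | rfl
      · exact hnc rfl
      · exact hnd rfl
  · rcases hvB with ⟨x', hx', rfl⟩ | ⟨c, d, h₂, hc, hecd, hsup₂, hnc, hnd⟩
    · rcases wt.branch h x' hsup with rfl | rfl
      · exact hnx rfl
      · exact hny rfl
    · by_cases hs : s(x, y) = s(c, d)
      · rcases Sym2.eq_iff.1 hs with ⟨rfl, rfl⟩ | ⟨rfl, rfl⟩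
        · exact (Set.disjoint_left.1 hAB hx) hc
        · omega
      · rcases (wt.disj h h₂ hs v hsup hsup₂).1 with rfl | rfl
        · exact hnx rfl
        · exact hny rfl

lemma TSet_adj (hle : wallG ≤ G) (henc : Function.Injective enc) {A B : Set γ} {x y : γ}
    (h : K.Adj x y) (hx : x ∈ A) (hy : y ∈ B) :
    ∃ u ∈ TSet wt enc A, ∃ v ∈ TSet wt enc B, G.Adj u v := by
  have hne : wt.emb x ≠ wt.emb y := fun e => h.ne (wt.inj e)
  rcases Nat.lt_or_ge (enc x) (enc y) with hlt | hge
  · -- internals owned by A ; take last edge of the path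
    obtain ⟨z, hadj, q', hq'⟩ := SimpleGraph.Walk.exists_eq_cons_of_ne hne.symm
      (wt.path h).reverse
    have hrevPath : (wt.path h).reverse.IsPath := (wt.isPath h).reverse
    have hznotY : z ≠ wt.emb y := by
      rw [hq', SimpleGraph.Walk.cons_isPath_iff] at hrevPath
      intro he; exact hrevPath.2 (he ▸ SimpleGraph.Walk.start_mem_support q')
    have hzsup : z ∈ (wt.path h).support := by
      have : z ∈ (wt.path h).reverse.support := by
        rw [hq']; simp
      rwa [SimpleGraph.Walk.support_reverse, List.mem_reverse] at this
    have hzA : z ∈ TSet wt enc A := by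
      by_cases hzx : z = wt.emb x
      · exact hzx ▸ emb_mem_TSet wt enc hx
      · exact Or.inr ⟨x, y, h, hx, hlt, hzsup, hzx, hznotY⟩
    exact ⟨z, hzA, wt.emb y, emb_mem_TSet wt enc hy, hle hadj.symm⟩
  · -- internals owned by B ; take first edge of the path
    have hlt' : enc y < enc x := by
      have : enc x ≠ enc y := fun e => h.ne (henc e)
      omega
    obtain ⟨z, hadj, q', hq'⟩ := SimpleGraph.Walk.exists_eq_cons_of_ne hne (wt.path h)
    have hPath := wt.isPath h
    have hznotX : z ≠ wt.emb x := by
      rw [hq', SimpleGraph.Walk.cons_isPath_iff] at hPath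
      intro he; exact hPath.2 (he ▸ SimpleGraph.Walk.start_mem_support q')
    have hzsup : z ∈ (wt.path h).support := by
      rw [hq']; simp
    have hzsup' : z ∈ (wt.path h.symm).support := by
      rw [wt.rev h, SimpleGraph.Walk.support_reverse]
      exact List.mem_reverse.2 hzsup
    have hzB : z ∈ TSet wt enc B := by
      by_cases hzy : z = wt.emb y
      · exact hzy ▸ emb_mem_TSet wt enc hy
      · exact Or.inr ⟨y, x, h.symm, hy, hlt', hzsup', hzy, hznotX⟩
    exact ⟨wt.emb x, emb_mem_TSet wt enc hx, z, hzB, hle hadj⟩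

end transfer
end CFA

namespace CFA
open SimpleGraph

structure FlapCtx (V : Type) (k : ℕ) where
  G : SimpleGraph V
  Gt : SimpleGraph V
  Gs : Fin (k+1) → SimpleGraph V
  Gv : Fin (k+1) → Set V
  hGsupp : ∀ i, ∀ ⦃x y : V⦄, (Gs i).Adj x y → x ∈ Gv i ∧ y ∈ Gv i
  hdecomp : (⨆ i, Gs i) = G
  hcliq : ∀ i, i ≠ 0 → ∀ x ∈ Gv i ∩ Gv 0, ∀ y ∈ Gv i ∩ Gv 0, x ≠ y → Gt.Adj x y
  hpair : ∀ i j, i ≠ j → Gv i ∩ Gv j ⊆ Gv 0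
  hsmall : ∀ i, i ≠ 0 → (Gv i ∩ Gv 0).encard ≤ 3
  hG0Gt : Gs 0 ≤ Gt

namespace FlapCtx
variable {V : Type} {k : ℕ} (C : FlapCtx V k)

lemma edge_cases {u v : V} (h : C.G.Adj u v) : ∃ i, (C.Gs i).Adj u v := by
  rw [← C.hdecomp] at h
  exact iSup_adj.1 h

lemma edge_proj {u v : V} (h : C.G.Adj u v) (hu : u ∈ C.Gv 0) (hv : v ∈ C.Gv 0) :
    C.Gt.Adj u v := by
  obtain ⟨i, hi⟩ := C.edge_cases h
  by_cases hi0 : i = 0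
  · exact C.hG0Gt (hi0 ▸ hi)
  · exact C.hcliq i hi0 u ⟨(C.hGsupp i hi).1, hu⟩ v ⟨(C.hGsupp i hi).2, hv⟩ h.ne

lemma edge_flap {u v : V} {i : Fin (k+1)} (h : C.G.Adj u v)
    (hu : u ∈ C.Gv i) (hu0 : u ∉ C.Gv 0) : v ∈ C.Gv i ∧ i ≠ 0 := by
  obtain ⟨j, hj⟩ := C.edge_cases h
  have hji : j = i := by
    by_contra hne
    exact hu0 (C.hpair i j (fun e => hne e.symm) ⟨hu, (C.hGsupp j hj).1⟩)
  subst hji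
  refine ⟨(C.hGsupp j hj).2, ?_⟩
  rintro rfl
  exact hu0 hu

lemma exit : ∀ {z y : V} (q : C.G.Walk z y) {i : Fin (k+1)},
    z ∈ C.Gv i → z ∉ C.Gv 0 → y ∈ C.Gv 0 →
    ∃ (v' : V) (q' : C.G.Walk v' y), v' ∈ C.Gv i ∩ C.Gv 0 ∧
      (∀ x ∈ q'.support, x ∈ q.support) ∧ q'.length < q.length := by
  intro z y q
  induction q with
  | nil => intro i hz hz0 hy; exact absurd hy hz0
  | @cons a b c h q2 ih =>
    intro i hz hz0 hy
    have hb : b ∈ C.Gv i := (C.edge_flap h hz hz0).1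
    by_cases hb0 : b ∈ C.Gv 0
    · exact ⟨b, q2, ⟨hb, hb0⟩, fun x hx => by simp [hx], by simp⟩
    · obtain ⟨v', q', hv', hsup, hlen⟩ := ih hb hb0 hy
      exact ⟨v', q', hv', fun x hx => by simp [hsup x hx], by simpa using Nat.lt_succ_of_lt hlen⟩

lemma exit_mem : ∀ {z y : V} (q : C.G.Walk z y) {i : Fin (k+1)},
    z ∈ C.Gv i → z ∉ C.Gv 0 → ¬(y ∈ C.Gv i ∧ y ∉ C.Gv 0) →
    ∃ v' ∈ q.support, v' ∈ C.Gv i ∩ C.Gv 0 := by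
  intro z y q
  induction q with
  | nil => intro i hz hz0 hy; exact absurd ⟨hz, hz0⟩ hy
  | @cons a b c h q2 ih =>
    intro i hz hz0 hy
    have hb : b ∈ C.Gv i := (C.edge_flap h hz hz0).1
    by_cases hb0 : b ∈ C.Gv 0
    · exact ⟨b, by simp, hb, hb0⟩
    · obtain ⟨v', hsup, hv'⟩ := ih hb hb0 hy
      exact ⟨v', by simp [hsup], hv'⟩

lemma int_walk : ∀ {u z : V} (q : C.G.Walk u z) {i : Fin (k+1)},
    u ∈ C.Gv i → u ∉ C.Gv 0 → (∀ s ∈ q.support, s ∉ C.Gv 0) →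
    z ∈ C.Gv i ∧ z ∉ C.Gv 0 := by
  intro u z q
  induction q with
  | nil => intro i hu hu0 _; exact ⟨hu, hu0⟩
  | @cons a b c h q2 ih =>
    intro i hu hu0 hq
    have hb : b ∈ C.Gv i := (C.edge_flap h hu hu0).1
    exact ih hb (hq b (by simp)) (fun s hs => hq s (by simp [hs]))

lemma proj_reach : ∀ (N : ℕ) {x y : V} (p : C.G.Walk x y), p.length ≤ N →
    ∀ (T : Set V), (∀ s ∈ p.support, s ∈ T) →
    ∀ (hx : x ∈ T ∩ C.Gv 0) (hy : y ∈ T ∩ C.Gv 0),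
    (C.Gt.induce (T ∩ C.Gv 0)).Reachable ⟨x, hx⟩ ⟨y, hy⟩ := by
  intro N
  induction N with
  | zero =>
    intro x y p hlen T hT hx hy
    cases p with
    | nil => rfl
    | cons h q => simp at hlen
  | succ N ih =>
    intro x y p hlen T hT hx hy
    cases p with
    | nil => rfl
    | @cons _ b _ h q =>
      have hbT : b ∈ T := hT b (by simp)
      by_cases hb0 : b ∈ C.Gv 0
      · have hstep : (C.Gt.induce (T ∩ C.Gv 0)).Adj ⟨x, hx⟩ ⟨b, ⟨hbT, hb0⟩⟩ :=
          induce_adj' _ _ (C.edge_proj h hx.2 hb0)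
        refine hstep.reachable.trans (ih q (by simpa using hlen) T
          (fun s hs => hT s (by simp [hs])) ⟨hbT, hb0⟩ hy)
      · obtain ⟨j, hj⟩ := C.edge_cases h
        have hbj : b ∈ C.Gv j := (C.hGsupp j hj).2
        have haj : x ∈ C.Gv j := (C.hGsupp j hj).1
        have hj0 : j ≠ 0 := fun e => hb0 (e ▸ hbj)
        obtain ⟨v', q', hv', hsup, hlen'⟩ := C.exit q hbj hb0 hy.2
        have hv'T : v' ∈ T := hT v' (by simp [hsup v' (SimpleGraph.Walk.start_mem_support q')])
        have htail := ih q' (by simp at hlen; omega) T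
          (fun s hs => hT s (by simp [hsup s hs])) ⟨hv'T, hv'.2⟩ hy
        by_cases hav : x = v'
        · subst hav; exact htail
        · have hstep : (C.Gt.induce (T ∩ C.Gv 0)).Adj ⟨x, hx⟩ ⟨v', ⟨hv'T, hv'.2⟩⟩ :=
            induce_adj' _ _ (C.hcliq j hj0 x ⟨haj, hx.2⟩ v' hv' hav)
          exact hstep.reachable.trans htail
end FlapCtx
end CFA

namespace CFA
open SimpleGraph

variable {V : Type} {k : ℕ}

/-- the interior-set-in-one-flap contradiction, and final projection -/
theorem FlapCtx.project [Fintype V] (C : FlapCtx V k) {n : ℕ}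
    (ψ : Fin n × Fin n → Set V)
    (hconn : ∀ a, (C.G.induce (ψ a)).Connected)
    (hdisj : ∀ ⦃a b : Fin n × Fin n⦄, a ≠ b → Disjoint (ψ a) (ψ b))
    (hadj : ∀ ⦃a b : Fin n × Fin n⦄, (gridGraph n n).Adj a b →
      ∃ u ∈ ψ a, ∃ v ∈ ψ b, C.G.Adj u v)
    (hbd : ∀ a : Fin n × Fin n,
      (a.1.val = 0 ∨ a.1.val = n-1 ∨ a.2.val = 0 ∨ a.2.val = n-1) →
      (ψ a ∩ C.Gv 0).Nonempty) :
    IsMinor (gridGraph n n) C.Gt := by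
  classical
  have wk : ∀ (a : Fin n × Fin n), ∀ u ∈ ψ a, ∀ v ∈ ψ a,
      ∃ p : C.G.Walk u v, ∀ s ∈ p.support, s ∈ ψ a := by
    intro a u hu v hv
    obtain ⟨q, hq⟩ := exists_walk_of_induce ((hconn a).preconnected ⟨u, hu⟩ ⟨v, hv⟩).some
    exact ⟨q, hq⟩
  have cross : ∀ (a : Fin n × Fin n) (i : Fin (k+1)), ∀ u ∈ ψ a,
      u ∈ C.Gv i → u ∉ C.Gv 0 → ∀ z ∈ ψ a, ¬(z ∈ C.Gv i ∧ z ∉ C.Gv 0) →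
      ∃ v' ∈ ψ a, v' ∈ C.Gv i ∩ C.Gv 0 := by
    intro a i u hu hui hu0 z hz hznot
    obtain ⟨p, hp⟩ := wk a u hu z hz
    obtain ⟨v', hsup, hv'⟩ := C.exit_mem p hui hu0 hznot
    exact ⟨v', hp v' hsup, hv'⟩
  -- every branch set meets `Gv 0`
  have hne : ∀ a : Fin n × Fin n, (ψ a ∩ C.Gv 0).Nonempty := by
    intro a
    by_contra hcon
    rw [Set.not_nonempty_iff_eq_empty] at hcon
    have hno0 : ∀ z ∈ ψ a, z ∉ C.Gv 0 := by
      intro z hz h0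
      exact absurd hcon (Set.nonempty_iff_ne_empty.1 ⟨z, hz, h0⟩)
    have hnotbd : ¬(a.1.val = 0 ∨ a.1.val = n-1 ∨ a.2.val = 0 ∨ a.2.val = n-1) := by
      intro hb
      obtain ⟨g, hg⟩ := hbd a hb
      exact hno0 g hg.1 hg.2
    have hib : 1 ≤ a.1.val ∧ a.1.val ≤ n-2 ∧ 1 ≤ a.2.val ∧ a.2.val ≤ n-2 := by
      have h1 := a.1.isLt; have h2 := a.2.isLt
      omega
    -- find the flap that contains `ψ a`
    have haup : (gridGraph n n).Adj a (⟨a.1.val - 1, by omega⟩, a.2) := by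
      rw [gridGraph_adj_iff]
      simp only [Fin.val_mk, true_and, and_true, true_or, or_true]
      omega
    obtain ⟨u, hu, v, hv, he⟩ := hadj haup
    have hu0 : u ∉ C.Gv 0 := hno0 u hu
    obtain ⟨i0, hi0e⟩ := C.edge_cases he
    have hui0 : u ∈ C.Gv i0 := (C.hGsupp i0 hi0e).1
    have hi00 : i0 ≠ 0 := fun e => hu0 (e ▸ hui0)
    set S : Set (Fin n × Fin n) :=
      {b | (ψ b).Nonempty ∧ ψ b ⊆ {x | x ∈ C.Gv i0 ∧ x ∉ C.Gv 0}} with hS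
    have haS : a ∈ S := by
      refine ⟨⟨u, hu⟩, ?_⟩
      intro z hz
      obtain ⟨p, hp⟩ := wk a u hu z hz
      exact C.int_walk p hui0 hu0 (fun s hs => hno0 s (hp s hs))
    have hSint : ∀ b ∈ S, 1 ≤ b.1.val ∧ b.1.val ≤ n-2 ∧ 1 ≤ b.2.val ∧ b.2.val ≤ n-2 := by
      intro b hb
      by_contra hcon2
      have hbbd : (b.1.val = 0 ∨ b.1.val = n-1 ∨ b.2.val = 0 ∨ b.2.val = n-1) := by
        have h1 := b.1.isLt; have h2 := b.2.isLt
        omega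
      obtain ⟨g, hg1, hg2⟩ := hbd b hbbd
      exact (hb.2 hg1).2 hg2
    have hSne : S.Nonempty := ⟨a, haS⟩
    obtain ⟨a1, ha1S, ha1m⟩ := Set.exists_min_image S (fun b => b.1.val) (Set.toFinite S) hSne
    obtain ⟨a2, ha2S, ha2m⟩ := Set.exists_max_image S (fun b => b.1.val) (Set.toFinite S) hSne
    obtain ⟨a3, ha3S, ha3m⟩ := Set.exists_min_image S (fun b => b.2.val) (Set.toFinite S) hSne
    obtain ⟨a4, ha4S, ha4m⟩ := Set.exists_max_image S (fun b => b.2.val) (Set.toFinite S) hSne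
    have hi1 := hSint a1 ha1S
    have hi2 := hSint a2 ha2S
    have hi3 := hSint a3 ha3S
    have hi4 := hSint a4 ha4S
    set b1 : Fin n × Fin n := (⟨a1.1.val - 1, by omega⟩, a1.2) with hb1
    set b2 : Fin n × Fin n := (⟨a2.1.val + 1, by omega⟩, a2.2) with hb2
    set b3 : Fin n × Fin n := (a3.1, ⟨a3.2.val - 1, by omega⟩) with hb3
    set b4 : Fin n × Fin n := (a4.1, ⟨a4.2.val + 1, by omega⟩) with hb4
    have hadj1 : (gridGraph n n).Adj a1 b1 := by rw [gridGraph_adj_iff]; simp only [hb1, Fin.val_mk, true_and, and_true, true_or, or_true]; omega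
    have hadj2 : (gridGraph n n).Adj a2 b2 := by rw [gridGraph_adj_iff]; simp only [hb2, Fin.val_mk, true_and, and_true, true_or, or_true]; omega
    have hadj3 : (gridGraph n n).Adj a3 b3 := by rw [gridGraph_adj_iff]; simp only [hb3, Fin.val_mk, true_and, and_true, true_or, or_true]; omega
    have hadj4 : (gridGraph n n).Adj a4 b4 := by rw [gridGraph_adj_iff]; simp only [hb4, Fin.val_mk, true_and, and_true, true_or, or_true]; omega
    have hout1 : b1 ∉ S := fun hb => by have := ha1m b1 hb; simp only [hb1, Fin.val_mk, true_and, and_true, true_or, or_true] at this; omega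
    have hout2 : b2 ∉ S := fun hb => by have := ha2m b2 hb; simp only [hb2, Fin.val_mk, true_and, and_true, true_or, or_true] at this; omega
    have hout3 : b3 ∉ S := fun hb => by have := ha3m b3 hb; simp only [hb3, Fin.val_mk, true_and, and_true, true_or, or_true] at this; omega
    have hout4 : b4 ∉ S := fun hb => by have := ha4m b4 hb; simp only [hb4, Fin.val_mk, true_and, and_true, true_or, or_true] at this; omega
    have getβ : ∀ (aS bO : Fin n × Fin n), aS ∈ S → bO ∉ S →
        (gridGraph n n).Adj aS bO → ∃ β ∈ ψ bO, β ∈ C.Gv i0 ∩ C.Gv 0 := by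
      intro aS bO hSa hOut hAdj
      obtain ⟨u', hu', v', hv', he'⟩ := hadj hAdj
      have hu'2 := hSa.2 hu'
      have hv'i : v' ∈ C.Gv i0 := (C.edge_flap he' hu'2.1 hu'2.2).1
      by_cases hv0 : v' ∈ C.Gv 0
      · exact ⟨v', hv', hv'i, hv0⟩
      · have hzex : ∃ z ∈ ψ bO, ¬(z ∈ C.Gv i0 ∧ z ∉ C.Gv 0) := by
          by_contra hall
          push_neg at hall
          exact hOut ⟨⟨v', hv'⟩, fun z hz => hall z hz⟩
        obtain ⟨z, hz, hznot⟩ := hzex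
        exact cross bO i0 v' hv' hv'i hv0 z hz hznot
    obtain ⟨β1, hβ1ψ, hβ1⟩ := getβ a1 b1 ha1S hout1 hadj1
    obtain ⟨β2, hβ2ψ, hβ2⟩ := getβ a2 b2 ha2S hout2 hadj2
    obtain ⟨β3, hβ3ψ, hβ3⟩ := getβ a3 b3 ha3S hout3 hadj3
    obtain ⟨β4, hβ4ψ, hβ4⟩ := getβ a4 b4 ha4S hout4 hadj4
    -- the four outside neighbours are pairwise distinct
    have hd12 : b1 ≠ b2 := by
      simp only [hb1, hb2, ne_eq, Prod.ext_iff, Fin.ext_iff, Fin.val_mk, true_and, and_true, true_or, or_true]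
      have := ha1m a2 ha2S
      omega
    have hd13 : b1 ≠ b3 := by
      simp only [hb1, hb3, ne_eq, Prod.ext_iff, Fin.ext_iff, Fin.val_mk, true_and, and_true, true_or, or_true]
      have := ha3m a1 ha1S
      omega
    have hd14 : b1 ≠ b4 := by
      simp only [hb1, hb4, ne_eq, Prod.ext_iff, Fin.ext_iff, Fin.val_mk, true_and, and_true, true_or, or_true]
      have := ha4m a1 ha1S
      omega
    have hd23 : b2 ≠ b3 := by
      simp only [hb2, hb3, ne_eq, Prod.ext_iff, Fin.ext_iff, Fin.val_mk, true_and, and_true, true_or, or_true]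
      have := ha3m a2 ha2S
      omega
    have hd24 : b2 ≠ b4 := by
      simp only [hb2, hb4, ne_eq, Prod.ext_iff, Fin.ext_iff, Fin.val_mk, true_and, and_true, true_or, or_true]
      have := ha4m a2 ha2S
      omega
    have hd34 : b3 ≠ b4 := by
      simp only [hb3, hb4, ne_eq, Prod.ext_iff, Fin.ext_iff, Fin.val_mk, true_and, and_true, true_or, or_true]
      have h1 := ha3m a4 ha4S
      have h2 := ha4m a3 ha3S
      omega
    have hβd : β1 ≠ β2 ∧ β1 ≠ β3 ∧ β1 ≠ β4 ∧ β2 ≠ β3 ∧ β2 ≠ β4 ∧ β3 ≠ β4 := by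
      refine ⟨?_, ?_, ?_, ?_, ?_, ?_⟩ <;>
        [skip; skip; skip; skip; skip; skip]
      · exact fun e => Set.disjoint_left.1 (hdisj hd12) hβ1ψ (e ▸ hβ2ψ)
      · exact fun e => Set.disjoint_left.1 (hdisj hd13) hβ1ψ (e ▸ hβ3ψ)
      · exact fun e => Set.disjoint_left.1 (hdisj hd14) hβ1ψ (e ▸ hβ4ψ)
      · exact fun e => Set.disjoint_left.1 (hdisj hd23) hβ2ψ (e ▸ hβ3ψ)
      · exact fun e => Set.disjoint_left.1 (hdisj hd24) hβ2ψ (e ▸ hβ4ψ)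
      · exact fun e => Set.disjoint_left.1 (hdisj hd34) hβ3ψ (e ▸ hβ4ψ)
    have hsub : ({β1, β2, β3, β4} : Set V) ⊆ C.Gv i0 ∩ C.Gv 0 := by
      rintro x (rfl | rfl | rfl | rfl)
      exacts [hβ1, hβ2, hβ3, hβ4]
    have hcard : ({β1, β2, β3, β4} : Set V).encard = 4 := by
      rw [Set.encard_insert_of_notMem (by simp [hβd.1, hβd.2.1, hβd.2.2.1]),
        Set.encard_insert_of_notMem (by simp [hβd.2.2.2.1, hβd.2.2.2.2.1]),
        Set.encard_pair hβd.2.2.2.2.2]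
      rfl
    have hle4 : (4 : ℕ∞) ≤ (C.Gv i0 ∩ C.Gv 0).encard := hcard ▸ Set.encard_mono hsub
    have := le_trans hle4 (C.hsmall i0 hi00)
    norm_num at this
  -- the final minor model
  refine ⟨fun a => ψ a ∩ C.Gv 0, ?_, ?_, ?_⟩
  · intro a
    rw [SimpleGraph.connected_iff]
    obtain ⟨g, hg⟩ := hne a
    refine ⟨?_, ⟨⟨g, hg⟩⟩⟩
    intro x y
    obtain ⟨p, hp⟩ := wk a x.1 x.2.1 y.1 y.2.1
    have := C.proj_reach p.length p le_rfl (ψ a) hp x.2 y.2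
    exact this
  · intro a b hab
    exact (hdisj hab).mono Set.inter_subset_left Set.inter_subset_left
  · intro a b hab
    obtain ⟨u, hu, v, hv, he⟩ := hadj hab
    obtain ⟨ga, hga⟩ := hne a
    obtain ⟨gb, hgb⟩ := hne b
    by_cases hu0 : u ∈ C.Gv 0
    · by_cases hv0 : v ∈ C.Gv 0
      · exact ⟨u, ⟨hu, hu0⟩, v, ⟨hv, hv0⟩, C.edge_proj he hu0 hv0⟩
      · obtain ⟨j, hj⟩ := C.edge_cases he
        have hvj : v ∈ C.Gv j := (C.hGsupp j hj).2
        have huj : u ∈ C.Gv j := (C.hGsupp j hj).1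
        have hj0 : j ≠ 0 := fun e => hv0 (e ▸ hvj)
        obtain ⟨v', hv'ψ, hv'⟩ := cross b j v hv hvj hv0 gb hgb.1
          (fun hcc => hcc.2 hgb.2)
        have huv' : u ≠ v' :=
          fun e => Set.disjoint_left.1 (hdisj hab.ne) hu (e ▸ hv'ψ)
        exact ⟨u, ⟨hu, hu0⟩, v', ⟨hv'ψ, hv'.2⟩,
          C.hcliq j hj0 u ⟨huj, hu0⟩ v' hv' huv'⟩
    · obtain ⟨j, hj⟩ := C.edge_cases he
      have hvj : v ∈ C.Gv j := (C.hGsupp j hj).2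
      have huj : u ∈ C.Gv j := (C.hGsupp j hj).1
      have hj0 : j ≠ 0 := fun e => hu0 (e ▸ huj)
      obtain ⟨u', hu'ψ, hu'⟩ := cross a j u hu huj hu0 ga hga.1
        (fun hcc => hcc.2 hga.2)
      by_cases hv0 : v ∈ C.Gv 0
      · have huv' : u' ≠ v :=
          fun e => Set.disjoint_left.1 (hdisj hab.ne) hu'ψ (e ▸ hv)
        exact ⟨u', ⟨hu'ψ, hu'.2⟩, v, ⟨hv, hv0⟩,
          C.hcliq j hj0 u' hu' v ⟨hvj, hv0⟩ huv'⟩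
      · obtain ⟨v', hv'ψ, hv'⟩ := cross b j v hv hvj hv0 gb hgb.1
          (fun hcc => hcc.2 hgb.2)
        have huv' : u' ≠ v' :=
          fun e => Set.disjoint_left.1 (hdisj hab.ne) hu'ψ (e ▸ hv'ψ)
        exact ⟨u', ⟨hu'ψ, hu'.2⟩, v', ⟨hv'ψ, hv'.2⟩,
          C.hcliq j hj0 u' hu' v' hv' huv'⟩

end CFA

namespace CFA
open SimpleGraph

lemma enc_inj (w : ℕ) : Function.Injective
    (fun v : ↥(elemWallVerts w w) => v.1.1.val * (2*w) + v.1.2.val) := by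
  intro u v h
  simp only at h
  have h1 := u.1.2.isLt
  have h2 := v.1.2.isLt
  have h3 := u.1.1.isLt
  have h4 := v.1.1.isLt
  rcases Nat.eq_zero_or_pos w with rfl | hw
  · omega
  · have hm : 0 < 2*w := by omega
    have e2 : u.1.2.val = v.1.2.val := by
      have c1 : (u.1.1.val*(2*w)+u.1.2.val) % (2*w) = u.1.2.val := by
        rw [Nat.add_comm, Nat.add_mul_mod_self_right, Nat.mod_eq_of_lt h1]
      have c2 : (v.1.1.val*(2*w)+v.1.2.val) % (2*w) = v.1.2.val := by
        rw [Nat.add_comm, Nat.add_mul_mod_self_right, Nat.mod_eq_of_lt h2]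
      rw [← c1, ← c2, h]
    have e1 : u.1.1.val = v.1.1.val :=
      Nat.eq_of_mul_eq_mul_right hm (by omega)
    apply Subtype.ext
    apply Prod.ext <;> apply Fin.ext
    · exact e1
    · exact e2

end CFA

theorem cflat_grid_minor' {V : Type} [Fintype V] (G : SimpleGraph V) (w : ℕ)
    (wallG : SimpleGraph V) (wallV : Set V)
    (hwall_le : wallG ≤ G)
    (wit : TMWitness (elemWall w w) wallG)
    (Cg : SimpleGraph V) (Cv : Set V)
    (hCyc2 : ∀ a ∈ Cv, (Cg.neighborSet a).ncard = 2)
    (hpegs : ∀ p ∈ elemWallPegs w w, wit.emb p ∈ Cv)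
    (k : ℕ) (Gs : Fin (k + 1) → SimpleGraph V) (Gv : Fin (k + 1) → Set V)
    (hGsupp : ∀ i, ∀ ⦃x y : V⦄, (Gs i).Adj x y → x ∈ Gv i ∧ y ∈ Gv i)
    (hdecomp : (⨆ i, Gs i) = G)
    (hCG0 : Cg ≤ Gs 0)
    (Gt : SimpleGraph V) (hG0Gt : Gs 0 ≤ Gt)
    (hsmall : ∀ i, i ≠ 0 → (Gv i ∩ Gv 0).encard ≤ 3)
    (hcliq : ∀ i, i ≠ 0 → ∀ x ∈ Gv i ∩ Gv 0, ∀ y ∈ Gv i ∩ Gv 0, x ≠ y → Gt.Adj x y)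
    (hpair : ∀ i j, i ≠ j → Gv i ∩ Gv j ⊆ Gv 0) :
    IsMinor (gridGraph (w - 2) (w - 2)) Gt := by
  classical
  by_cases hw : 3 ≤ w
  case neg =>
    have hempty : IsEmpty (Fin (w-2) × Fin (w-2)) := by
      have h0 : w - 2 = 0 := by omega
      rw [h0]
      infer_instance
    exact ⟨fun _ => ∅, fun a => hempty.elim a, fun a b hab => hempty.elim a,
      fun a b hab => hempty.elim a⟩
  case pos =>
    set C : CFA.FlapCtx V k :=
      ⟨G, Gt, Gs, Gv, hGsupp, hdecomp, hcliq, hpair, hsmall, hG0Gt⟩ with hC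
    have hCvGv0 : Cv ⊆ Gv 0 := by
      intro v hv
      have h2 := hCyc2 v hv
      have hne : (Cg.neighborSet v).Nonempty := by
        by_contra hcon
        rw [Set.not_nonempty_iff_eq_empty] at hcon
        rw [hcon, Set.ncard_empty] at h2
        omega
      obtain ⟨u, hu⟩ := hne
      exact (hGsupp 0 (hCG0 hu)).1
    set enc : ↥(elemWallVerts w w) → ℕ :=
      fun v => v.1.1.val * (2*w) + v.1.2.val with hencdef
    have hencinj : Function.Injective enc := CFA.enc_inj w
    set ψ : Fin (w-2) × Fin (w-2) → Set V :=
      fun a => CFA.TSet wit enc (CFA.PS w a.1.val a.2.val) with hψ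
    have hboundsI : ∀ a : Fin (w-2) × Fin (w-2), a.1.val ≤ w-3 := by
      intro a; have := a.1.isLt; omega
    have hboundsJ : ∀ a : Fin (w-2) × Fin (w-2), a.2.val ≤ w-3 := by
      intro a; have := a.2.isLt; omega
    refine CFA.FlapCtx.project C ψ ?_ ?_ ?_ ?_
    · intro a
      exact CFA.TSet_conn wit enc hwall_le hencinj
        (CFA.phi_connected hw (hboundsI a) (hboundsJ a))
    · intro a b hab
      exact CFA.TSet_disj wit enc hencinj (CFA.phi_disj hw hab)
    · intro a b hab
      obtain ⟨x, hx, y, hy, hxy⟩ := CFA.phi_adj hw hab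
      exact CFA.TSet_adj wit enc hwall_le hencinj hxy hx hy
    · intro a hbd
      have hbd' : a.1.val = 0 ∨ a.1.val = w-3 ∨ a.2.val = 0 ∨ a.2.val = w-3 := by
        omega
      obtain ⟨p, hpeg, hpPS⟩ := CFA.phi_peg hw a hbd'
      exact ⟨wit.emb p, CFA.emb_mem_TSet wit enc hpPS, hCvGv0 (hpegs p hpeg)⟩

/-- Lemma 2.24: let `W` be a `(w × w)`-wall in `G` and `C` a
cycle in `G` containing a choice of pegs of `W`, and let `G₀, G₁, …, G_k` and a
plane graph `G̃` witness that `G` is `C`-flat.  Then `G̃` contains the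
`(w-2) × (w-2)` grid as a minor. -/
theorem cflat_grid_minor {V : Type} [Fintype V] (G : SimpleGraph V) (w : ℕ)
    (wallG : SimpleGraph V) (wallV : Set V)
    (hwall_le : wallG ≤ G)
    (wit : TMWitness (elemWall w w) wallG)
    (hcover : WallCover w wallG wallV wit)
    (Cg : SimpleGraph V) (Cv : Set V)
    (hC_le : Cg ≤ G) (hCyc : IsCycleGraphOn Cg Cv)
    (hpegs : ∀ p ∈ elemWallPegs w w, wit.emb p ∈ Cv)
    (k : ℕ) (Gs : Fin (k + 1) → SimpleGraph V) (Gv : Fin (k + 1) → Set V)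
    (hGsupp : ∀ i, ∀ ⦃x y : V⦄, (Gs i).Adj x y → x ∈ Gv i ∧ y ∈ Gv i)
    (hdecomp : (⨆ i, Gs i) = G)
    (hedisj : ∀ i j, i ≠ j → Disjoint (Gs i).edgeSet (Gs j).edgeSet)
    (hCG0 : Cg ≤ Gs 0)
    (Gt : SimpleGraph V) (hG0Gt : Gs 0 ≤ Gt)
    (hGtSupp : ∀ ⦃x y : V⦄, Gt.Adj x y → x ∈ Gv 0 ∧ y ∈ Gv 0)
    (hplanar : PlanarWithFace Gt Cg)
    (hsmall : ∀ i, i ≠ 0 → (Gv i ∩ Gv 0).encard ≤ 3)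
    (hcliq : ∀ i, i ≠ 0 → ∀ x ∈ Gv i ∩ Gv 0, ∀ y ∈ Gv i ∩ Gv 0, x ≠ y → Gt.Adj x y)
    (hpair : ∀ i j, i ≠ j → Gv i ∩ Gv j ⊆ Gv 0) :
    IsMinor (gridGraph (w - 2) (w - 2)) Gt := by
  exact cflat_grid_minor' G w wallG wallV hwall_le wit Cg Cv hCyc.2.1 hpegs k Gs Gv
    hGsupp hdecomp hCG0 Gt hG0Gt hsmall hcliq hpair
end
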